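/- arXiv:2407.11584 — 12 statements merged into one kernel-verified Lean document; each statement's English description precedes it below -/
import Mathlib

section
/- Let S ⊆ ℕ^d be an affine semigroup minimally generated by n_1,…,n_r, let K be a field, R = K[S] the semigroup ring, and 𝔪 the ideal of R generated by X^{n_1},…,X^{n_r}. Let Q = {a_1,…,a_m} be a finite subset of S such that X^{a_1},…,X^{a_m} is a regular sequence on R, and set 𝔫 = (X^{a_1},…,X^{a_m}). Then the dimension of the K-vector space (𝔫 : 𝔪)/𝔫 equals the cardinality of Maximals_{≤_S} Ap(S,Q). (When the regular sequence is maximal this common value is the type t(S) of K[S].) -/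
/-! Common definitions for C-semigroups in `ℕ^d = Fin d → ℕ`. -/

/-- `x ≤_L y` iff `y = x + l` for some `l ∈ L`. -/
def leL {M : Type*} [AddCommMonoid M] (L : Set M) (x y : M) : Prop :=
  ∃ l ∈ L, y = x + l

/-- Elements of `A` maximal with respect to `≤_L`. -/
def maximalsL {M : Type*} [AddCommMonoid M] (L A : Set M) : Set M :=
  {a | a ∈ A ∧ ∀ b ∈ A, leL L a b → a = b}

/-- The Apéry set of `S` with respect to `X`. -/
def aperySet {M : Type*} [AddCommMonoid M] (S : AddSubmonoid M) (X : Set M) : Set M :=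
  {s | s ∈ S ∧ ¬ ∃ x ∈ X, ∃ t ∈ S, s = t + x}

/-- Integer points of the rational cone spanned by `S`. -/
def coneSet {d : ℕ} (S : AddSubmonoid (Fin d → ℕ)) : Set (Fin d → ℕ) :=
  {x | ∃ (n : ℕ) (c : Fin n → ℚ) (s : Fin n → (Fin d → ℕ)),
      (∀ i, 0 ≤ c i) ∧ (∀ i, s i ∈ S) ∧ ∀ j, (x j : ℚ) = ∑ i, c i * (s i j : ℚ)}

/-- The set of gaps `H(S) = C(S) \ S`. -/
def gapSet {d : ℕ} (S : AddSubmonoid (Fin d → ℕ)) : Set (Fin d → ℕ) :=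
  coneSet S \ (S : Set (Fin d → ℕ))

/-- Pseudo-Frobenius elements of `S`. -/
def pseudoFrobenius {d : ℕ} (S : AddSubmonoid (Fin d → ℕ)) : Set (Fin d → ℕ) :=
  {h | h ∈ gapSet S ∧ ∀ s ∈ S, s ≠ 0 → h + s ∈ S}

/-- Special gaps of `S`. -/
def specialGaps {d : ℕ} (S : AddSubmonoid (Fin d → ℕ)) : Set (Fin d → ℕ) :=
  {h | h ∈ pseudoFrobenius S ∧ h + h ∈ S}

/-- The conductor of `S`. -/
def conductorSet {d : ℕ} (S : AddSubmonoid (Fin d → ℕ)) : Set (Fin d → ℕ) :=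
  {s | s ∈ S ∧ ∀ c ∈ coneSet S, s + c ∈ S}

/-- A relaxed monomial order on `ℕ^d`. -/
structure RelaxedMonomialOrder (d : ℕ) where
  le : (Fin d → ℕ) → (Fin d → ℕ) → Prop
  isLinearOrder : IsLinearOrder (Fin d → ℕ) le
  zero_le : ∀ v, le 0 v
  le_add_right : ∀ u v w, le u v → le u (v + w)

/-- A term order on `ℕ^d`. -/
structure TermOrderOn (d : ℕ) where
  le : (Fin d → ℕ) → (Fin d → ℕ) → Prop
  isLinearOrder : IsLinearOrder (Fin d → ℕ) le
  zero_le : ∀ v, le 0 v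
  add_le_add_right : ∀ u v w, le u v → le (u + w) (v + w)

/-- Frobenius allowable elements of a C-semigroup `S`. -/
def frobAllowable {d : ℕ} (S : AddSubmonoid (Fin d → ℕ)) : Set (Fin d → ℕ) :=
  {h | h ∈ gapSet S ∧ ∃ o : RelaxedMonomialOrder d, ∀ x ∈ gapSet S, o.le x h}

/-- Pseudo-Frobenius elements, complement version (for generalized numerical semigroups). -/
def PFmonoid {M : Type*} [AddCommMonoid M] (S : AddSubmonoid M) : Set M :=
  {h | h ∉ S ∧ ∀ s ∈ S, s ≠ 0 → h + s ∈ S}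

/-- Conductor, complement version (for generalized numerical semigroups). -/
def conductorMonoid {M : Type*} [AddCommMonoid M] (S : AddSubmonoid M) : Set M :=
  {s | s ∈ S ∧ ∀ n : M, s + n ∈ S}

/-- Frobenius allowable elements, complement version (for generalized numerical semigroups). -/
def FAmonoid {d : ℕ} (S : AddSubmonoid (Fin d → ℕ)) : Set (Fin d → ℕ) :=
  {h | h ∉ S ∧ ∃ o : RelaxedMonomialOrder d, ∀ x, x ∉ S → o.le x h}

/-- The monomial `X^s ∈ K[S]` attached to an element `s` of the affine semigroup `S`. -/
noncomputable def mono {d : ℕ} (S : AddSubmonoid (Fin d → ℕ)) (K : Type*) [Field K]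
    (s : Fin d → ℕ) (hs : s ∈ S) : AddMonoidAlgebra K ↥S :=
  AddMonoidAlgebra.single (⟨s, hs⟩ : ↥S) (1 : K)

universe u

section AuxLemmas
open Finsupp
variable {d : ℕ} {S : AddSubmonoid (Fin d → ℕ)} {K : Type u} [Field K]

lemma aux_mul_single (f : AddMonoidAlgebra K ↥S) (u : ↥S) :
    (f * AddMonoidAlgebra.single u 1).coeff.support = f.coeff.support.map (addRightEmbedding u) :=
  AddMonoidAlgebra.support_coeff_mul_single f 1 (by simp) u

lemma aux_single_mem_supported (E : Set ↥S) (s : ↥S) (c : K) (h : s ∈ E) :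
    AddMonoidAlgebra.single s c ∈ AddMonoidAlgebra.supported K K E :=
  AddMonoidAlgebra.mem_supported.2 ((Finsupp.mem_supported K _).1 (Finsupp.single_mem_supported K c h))

lemma aux_mem_sup (f : AddMonoidAlgebra K ↥S) (u : ↥S) (E : Set ↥S) :
    f * AddMonoidAlgebra.single u 1 ∈ AddMonoidAlgebra.supported K K E ↔ ∀ s ∈ f.coeff.support, s + u ∈ E := by
  classical
  rw [AddMonoidAlgebra.mem_supported, aux_mul_single, Finset.map_eq_image]
  simp only [addRightEmbedding_apply, Finset.coe_image, Set.image_subset_iff, Set.subset_def, Finset.mem_coe,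
    Set.mem_preimage]
  exact ⟨fun h s hs => h _ ⟨s, hs, rfl⟩, fun h x ⟨s, hs, he⟩ => he ▸ h s hs⟩

lemma aux_span_monos (m : ℕ) (a : Fin m → (Fin d → ℕ)) (haS : ∀ i, a i ∈ S) :
    (Ideal.span (Set.range fun i => mono S K (a i) (haS i))).restrictScalars K
      = AddMonoidAlgebra.supported K K {s : ↥S | ∃ i, ∃ t ∈ S, (s : Fin d → ℕ) = t + a i} := by
  classical
  apply le_antisymm
  · intro x hx
    rw [Submodule.restrictScalars_mem] at hx
    refine Submodule.span_induction ?_ ?_ ?_ ?_ hx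
    · rintro y ⟨i, rfl⟩
      exact aux_single_mem_supported _ _ 1 ⟨i, 0, S.zero_mem, (zero_add _).symm⟩
    · exact Submodule.zero_mem _
    · exact fun y z _ _ hy hz => Submodule.add_mem _ hy hz
    · intro r y _ hy
      rw [AddMonoidAlgebra.mem_supported] at hy ⊢
      rw [smul_eq_mul]
      intro p hp
      have hmem := AddMonoidAlgebra.support_coeff_mul_subset r y (Finset.mem_coe.1 hp)
      rw [Finset.mem_add] at hmem
      obtain ⟨u, hu, v, hv, hp'⟩ := hmem
      obtain ⟨j, t, ht, hvt⟩ := hy (Finset.mem_coe.2 hv)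
      refine ⟨j, ↑u + t, S.add_mem u.2 ht, ?_⟩
      rw [← hp']
      push_cast [AddSubmonoid.coe_add]
      rw [hvt, add_assoc]
  · rw [AddMonoidAlgebra.supported_eq_span_single, Submodule.span_le]
    rintro y ⟨s, ⟨i, t, ht, hst⟩, rfl⟩
    rw [SetLike.mem_coe, Submodule.restrictScalars_mem]
    have hkey : AddMonoidAlgebra.single s (1:K)
        = AddMonoidAlgebra.single (⟨t, ht⟩ : ↥S) 1 * mono S K (a i) (haS i) := by
      simp only [mono]
      rw [AddMonoidAlgebra.single_mul_single, mul_one]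
      congr 1
      exact Subtype.ext hst
    show AddMonoidAlgebra.single s (1:K) ∈ _
    rw [hkey]
    exact Ideal.mul_mem_left _ _ (Ideal.subset_span ⟨i, rfl⟩)

lemma aux_colon (m r : ℕ) (a : Fin m → (Fin d → ℕ)) (haS : ∀ i, a i ∈ S)
    (g : Fin r → (Fin d → ℕ)) (hgS : ∀ i, g i ∈ S) :
    (Submodule.colon (Ideal.span (Set.range fun i => mono S K (a i) (haS i)))
        (Ideal.span (Set.range fun i => mono S K (g i) (hgS i)))).restrictScalars K
      = AddMonoidAlgebra.supported K K
          {s : ↥S | ∀ i, ∃ j, ∃ t ∈ S, (s : Fin d → ℕ) + g i = t + a j} := by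
  classical
  set N : Ideal (AddMonoidAlgebra K ↥S) :=
    Ideal.span (Set.range fun i => mono S K (a i) (haS i)) with hNdef
  have hNsup : ∀ x : AddMonoidAlgebra K ↥S,
      x ∈ N ↔ x ∈ AddMonoidAlgebra.supported K K {s : ↥S | ∃ i, ∃ t ∈ S, (s : Fin d → ℕ) = t + a i} := by
    intro x
    rw [← Submodule.restrictScalars_mem K, aux_span_monos m a haS]
  ext f
  rw [Submodule.restrictScalars_mem, Submodule.mem_colon]
  constructor
  · intro h
    rw [AddMonoidAlgebra.mem_supported]
    intro s hs i
    have h1 : f * mono S K (g i) (hgS i) ∈ N := by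
      have := h _ (Ideal.subset_span (Set.mem_range_self i))
      rwa [smul_eq_mul] at this
    rw [hNsup] at h1
    have h2 := (aux_mem_sup f (⟨g i, hgS i⟩ : ↥S) _).1 h1 s (Finset.mem_coe.1 hs)
    obtain ⟨j, t, ht, hjt⟩ := h2
    exact ⟨j, t, ht, hjt⟩
  · intro hf p hp
    refine Submodule.span_induction ?_ ?_ ?_ ?_ hp
    · rintro y ⟨i, rfl⟩
      rw [smul_eq_mul]
      rw [hNsup]
      simp only [mono]
      rw [aux_mem_sup]
      intro s hs
      exact AddMonoidAlgebra.mem_supported.1 hf (Finset.mem_coe.2 hs) i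
    · rw [smul_zero]; exact N.zero_mem
    · intro y z _ _ hy hz; rw [smul_add]; exact N.add_mem hy hz
    · intro c y _ hy
      rw [smul_comm]
      exact N.smul_mem c hy

end AuxLemmas



set_option maxHeartbeats 1000000 in
/-- Let `S ⊆ ℕ^d` be an affine semigroup minimally generated by
`n_1, …, n_r`, `K` a field, `R = K[S]`, `𝔪 = (X^{n_1}, …, X^{n_r})`, and let
`Q = {a_1, …, a_m} ⊆ S` be such that `X^{a_1}, …, X^{a_m}` is a regular sequence on `R`,
with `𝔫 = (X^{a_1}, …, X^{a_m})`. Then `dim_K (𝔫 : 𝔪)/𝔫 = |Maximals_{≤_S} Ap(S, Q)|`. -/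
theorem stmt0 {d : ℕ} (hd : 0 < d) (r m : ℕ)
    (S : AddSubmonoid (Fin d → ℕ))
    (gen : Fin r → (Fin d → ℕ)) (hgenS : ∀ i, gen i ∈ S)
    (hgen : AddSubmonoid.closure (Set.range gen) = S)
    (hminimal : ∀ i : Fin r, gen i ∉ AddSubmonoid.closure (Set.range gen \ {gen i}))
    (K : Type u) [Field K]
    (a : Fin m → (Fin d → ℕ)) (haS : ∀ i, a i ∈ S)
    -- `X^{a_1}, …, X^{a_m}` is a regular sequence on `R = K[S]`:
    (hproper : Ideal.span (Set.range fun i => mono S K (a i) (haS i)) ≠ ⊤)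
    (hreg : ∀ i : Fin m, ∀ y : AddMonoidAlgebra K ↥S,
      y * mono S K (a i) (haS i) ∈
          Ideal.span ((fun j => mono S K (a j) (haS j)) '' {j : Fin m | j < i}) →
      y ∈ Ideal.span ((fun j => mono S K (a j) (haS j)) '' {j : Fin m | j < i})) :
    Module.rank K
      ↥(Submodule.restrictScalars K
          (Submodule.map
            (Submodule.mkQ (Ideal.span (Set.range fun i => mono S K (a i) (haS i))))
            (Submodule.colon
              (Ideal.span (Set.range fun i => mono S K (a i) (haS i)))
              (Ideal.span (Set.range fun i => mono S K (gen i) (hgenS i))))))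
      = Cardinal.lift.{u}
        (Cardinal.mk ↥(maximalsL (S : Set (Fin d → ℕ)) (aperySet S (Set.range a)))) := by
  classical
  set N : Ideal (AddMonoidAlgebra K ↥S) :=
    Ideal.span (Set.range fun i => mono S K (a i) (haS i)) with hNdef
  set Mi : Ideal (AddMonoidAlgebra K ↥S) :=
    Ideal.span (Set.range fun i => mono S K (gen i) (hgenS i)) with hMdef
  set E : Set ↥S := {s : ↥S | ∃ i, ∃ t ∈ S, (s : Fin d → ℕ) = t + a i} with hEdef
  set E' : Set ↥S := {s : ↥S | ∀ i, ∃ j, ∃ t ∈ S, (s : Fin d → ℕ) + gen i = t + a j} with hE'def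
  have hN : ∀ x : AddMonoidAlgebra K ↥S, x ∈ N ↔ x ∈ AddMonoidAlgebra.supported K K E := fun x => by
    rw [← Submodule.restrictScalars_mem K, aux_span_monos m a haS]
  have hC : ∀ x : AddMonoidAlgebra K ↥S,
      x ∈ Submodule.colon N Mi ↔ x ∈ AddMonoidAlgebra.supported K K E' := fun x => by
    rw [← Submodule.restrictScalars_mem K, aux_colon m r a haS gen hgenS]
  set F : Set ↥S := E' \ E with hFdef
  set q : AddMonoidAlgebra K ↥S →ₗ[K] (AddMonoidAlgebra K ↥S ⧸ N) :=
    (N.mkQ).restrictScalars K with hqdef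
  set Φ : (↥F →₀ K) →ₗ[K] AddMonoidAlgebra K ↥S :=
    (AddMonoidAlgebra.coeffLinearEquiv K).symm.toLinearMap ∘ₗ Finsupp.lmapDomain K K (Subtype.val) with hPhidef
  have hPhiapp : ∀ gg : ↥F →₀ K, Φ gg = AddMonoidAlgebra.ofCoeff (Finsupp.mapDomain Subtype.val gg) := fun _ => rfl
  have hVle : Submodule.restrictScalars K (Submodule.map N.mkQ (Submodule.colon N Mi))
      ≤ LinearMap.range (q.comp Φ) := by
    rintro x hx
    rw [Submodule.restrictScalars_mem, Submodule.mem_map] at hx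
    obtain ⟨y, hy, rfl⟩ := hx
    rw [hC] at hy
    have hy' : y ∈ Submodule.span K ((fun s => AddMonoidAlgebra.single s (1:K)) '' E') := by
      rwa [← AddMonoidAlgebra.supported_eq_span_single]
    have hgen' : ∀ z ∈ ((fun s => AddMonoidAlgebra.single s (1:K)) '' E'),
        q z ∈ LinearMap.range (q.comp Φ) := by
      rintro z ⟨s, hs, rfl⟩
      by_cases hsE : s ∈ E
      · have hz : AddMonoidAlgebra.single s (1:K) ∈ N := (hN _).2 (aux_single_mem_supported _ _ 1 hsE)
        have hz0 : q (AddMonoidAlgebra.single s (1:K)) = 0 := (Submodule.Quotient.mk_eq_zero N).2 hz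
        rw [hz0]; exact zero_mem _
      · refine ⟨Finsupp.single (⟨s, hs, hsE⟩ : ↥F) 1, ?_⟩
        have hΦs : Φ (Finsupp.single (⟨s, ⟨hs, hsE⟩⟩ : ↥F) (1:K)) = AddMonoidAlgebra.single s 1 := by
          rw [hPhiapp, Finsupp.mapDomain_single]
          rfl
        rw [LinearMap.comp_apply, hΦs]
    refine Submodule.span_induction (p := fun z _ => q z ∈ LinearMap.range (q.comp Φ))
      hgen' ?_ ?_ ?_ hy'
    · show q 0 ∈ _
      rw [map_zero]; exact zero_mem _
    · intro u v _ _ hu hv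
      show q (u + v) ∈ _
      rw [map_add]; exact add_mem hu hv
    · intro c u _ hu
      show q (c • u) ∈ _
      rw [map_smul]; exact Submodule.smul_mem _ c hu
  have hVge : LinearMap.range (q.comp Φ)
      ≤ Submodule.restrictScalars K (Submodule.map N.mkQ (Submodule.colon N Mi)) := by
    rintro x ⟨gg, rfl⟩
    rw [Submodule.restrictScalars_mem, Submodule.mem_map]
    refine ⟨Φ gg, ?_, rfl⟩
    rw [hC, AddMonoidAlgebra.mem_supported, hPhiapp, AddMonoidAlgebra.coeff_ofCoeff]
    intro p hp
    obtain ⟨sF, _, rfl⟩ := Finset.mem_image.1 (Finsupp.mapDomain_support (Finset.mem_coe.1 hp))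
    exact sF.2.1
  have hV : Submodule.restrictScalars K (Submodule.map N.mkQ (Submodule.colon N Mi))
      = LinearMap.range (q.comp Φ) := le_antisymm hVle hVge
  have hinj : Function.Injective (q.comp Φ) := by
    rw [← LinearMap.ker_eq_bot]
    refine LinearMap.ker_eq_bot'.2 ?_
    intro gg hgg
    rw [LinearMap.comp_apply] at hgg
    have h0 : Φ gg ∈ N := (Submodule.Quotient.mk_eq_zero N).1 hgg
    rw [hN, AddMonoidAlgebra.mem_supported] at h0
    have hsupp : (Φ gg).coeff.support = ∅ := by
      by_contra hne
      obtain ⟨p, hp⟩ := Finset.nonempty_iff_ne_empty.2 hne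
      have hpE : p ∈ E := h0 (Finset.mem_coe.2 hp)
      rw [hPhiapp, AddMonoidAlgebra.coeff_ofCoeff] at hp
      obtain ⟨sF, _, rfl⟩ := Finset.mem_image.1 (Finsupp.mapDomain_support hp)
      exact sF.2.2 hpE
    have hΦ0 : Φ gg = 0 := AddMonoidAlgebra.coeff_eq_zero.1 (Finsupp.support_eq_empty.1 hsupp)
    apply Finsupp.mapDomain_injective (Subtype.val_injective : Function.Injective ((↑) : ↥F → ↥S))
    rw [Finsupp.mapDomain_zero]
    exact congrArg AddMonoidAlgebra.coeff hΦ0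
  have e := LinearEquiv.ofInjective (q.comp Φ) hinj
  rw [hV, ← e.rank_eq, rank_finsupp_self]
  have hgenne : ∀ i, gen i ≠ 0 := by
    intro i h
    refine hminimal i ?_
    rw [h]
    exact AddSubmonoid.zero_mem _
  have hdecomp : ∀ l, l ∈ S → l ≠ 0 → ∃ i, ∃ t ∈ S, l = gen i + t := by
    intro l hl hl0
    have hlc : l ∈ AddSubmonoid.closure (Set.range gen) := by rw [hgen]; exact hl
    have hres : l = 0 ∨ ∃ i, ∃ t ∈ S, l = gen i + t := by
      refine AddSubmonoid.closure_induction
        (motive := fun x _ => x = 0 ∨ ∃ i, ∃ t ∈ S, x = gen i + t) ?_ ?_ ?_ hlc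
      · rintro x ⟨i, rfl⟩
        exact Or.inr ⟨i, 0, S.zero_mem, (add_zero _).symm⟩
      · exact Or.inl rfl
      · rintro x y hx hy ihx ihy
        have hyS : y ∈ S := by rw [← hgen]; exact hy
        rcases ihx with rfl | ⟨i, t, ht, rfl⟩
        · rw [zero_add]; exact ihy
        · exact Or.inr ⟨i, t + y, S.add_mem ht hyS, add_assoc _ _ _⟩
    exact hres.resolve_left hl0
  have hsets : maximalsL (S : Set (Fin d → ℕ)) (aperySet S (Set.range a))
      = Subtype.val '' F := by
    ext x
    constructor
    · rintro ⟨⟨hxS, hxAp⟩, hmax⟩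
      refine ⟨⟨x, hxS⟩, ⟨?_, ?_⟩, rfl⟩
      · intro i
        by_contra hcon
        push_neg at hcon
        have hApi : x + gen i ∈ aperySet S (Set.range a) := by
          refine ⟨S.add_mem hxS (hgenS i), ?_⟩
          rintro ⟨y, ⟨j, rfl⟩, t, ht, heq⟩
          exact hcon j t ht heq
        have hx2 := hmax _ hApi ⟨gen i, hgenS i, rfl⟩
        exact hgenne i (left_eq_add.1 hx2)
      · rintro ⟨j, t, ht, heq⟩
        exact hxAp ⟨a j, ⟨j, rfl⟩, t, ht, heq⟩
    · rintro ⟨⟨x, hxS⟩, ⟨hxE', hxE⟩, rfl⟩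
      have hxAp : x ∈ aperySet S (Set.range a) := by
        refine ⟨hxS, ?_⟩
        rintro ⟨y, ⟨j, rfl⟩, t, ht, heq⟩
        exact hxE ⟨j, t, ht, heq⟩
      refine ⟨hxAp, ?_⟩
      rintro b hb ⟨l, hlS, rfl⟩
      by_cases hl0 : l = 0
      · rw [hl0, add_zero]
      · exfalso
        obtain ⟨i, t, ht, rfl⟩ := hdecomp l hlS hl0
        obtain ⟨j, u, hu, hju⟩ := hxE' i
        have hju' : x + gen i = u + a j := hju
        refine hb.2 ⟨a j, ⟨j, rfl⟩, u + t, S.add_mem hu ht, ?_⟩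
        rw [← add_assoc, hju', add_right_comm]
  congr 1
  rw [hsets, Cardinal.mk_image_eq Subtype.val_injective]
end

section
/- Let S ⊆ ℕ^d be an affine semigroup with PF(S) ≠ ∅ (an MPD-semigroup) and let x ∈ S be nonzero. Then Maximals_{≤_S} Ap(S,{x}) = {h + x : h ∈ PF(S)}. -/
private lemma apery_rep {d : ℕ} (T : Finset (Fin d → ℕ)) {s : Fin d → ℕ}
    (hs : s ∈ AddSubmonoid.closure (T : Set (Fin d → ℕ))) :
    ∃ f : (Fin d → ℕ) → ℕ, s = ∑ g ∈ T, f g • g := by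
  induction hs using AddSubmonoid.closure_induction with
  | mem g hg =>
    rw [Finset.mem_coe] at hg
    refine ⟨fun g' => if g' = g then 1 else 0, ?_⟩
    simp [ite_smul, Finset.sum_ite_eq', hg]
  | zero => exact ⟨fun _ => 0, by simp⟩
  | add a b ha hb iha ihb =>
    obtain ⟨f₁, hf₁⟩ := iha
    obtain ⟨f₂, hf₂⟩ := ihb
    refine ⟨f₁ + f₂, ?_⟩
    rw [hf₁, hf₂, ← Finset.sum_add_distrib]
    exact Finset.sum_congr rfl fun g _ => by rw [Pi.add_apply, add_smul]

private lemma mem_coneSet_of_nsmul {d : ℕ} {S : AddSubmonoid (Fin d → ℕ)} {h : Fin d → ℕ}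
    {N : ℕ} (hN : N ≠ 0) (hNh : N • h ∈ S) : h ∈ coneSet S := by
  refine ⟨1, fun _ => (N : ℚ)⁻¹, fun _ => N • h, fun i => by positivity, fun i => hNh,
    fun j => ?_⟩
  simp only [Fin.sum_univ_one, Pi.smul_apply, smul_eq_mul, Nat.cast_mul]
  rw [inv_mul_cancel_left₀ (by exact_mod_cast hN)]

private lemma exists_nsmul_mem {d : ℕ} {S : AddSubmonoid (Fin d → ℕ)} (hfg : S.FG)
    {h x : Fin d → ℕ} (hw : ∀ k : ℕ, k • h + x ∈ S) :
    ∃ N : ℕ, N ≠ 0 ∧ N • h ∈ S := by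
  obtain ⟨T, hT⟩ := hfg
  have hrep : ∀ k : ℕ, ∃ f : (Fin d → ℕ) → ℕ, k • h + x = ∑ g ∈ T, f g • g := by
    intro k
    apply apery_rep
    rw [hT]; exact hw k
  choose f hf using hrep
  have hpwo : (Set.univ : Set (↥T → ℕ)).IsPWO :=
    by simpa [Set.pi_univ] using Set.IsPWO.pi (s := fun (_ : ↥T) => (Set.univ : Set ℕ)) (fun _ => Set.IsWF.isPWO (Set.isWF_univ_iff.mpr inferInstance))
  obtain ⟨k, k', hkk', hle⟩ := hpwo.exists_lt (f := fun k (g : ↥T) => f k g) (fun _ => Set.mem_univ _)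
  have hle' : ∀ g ∈ T, f k g ≤ f k' g := fun g hg => hle ⟨g, hg⟩
  have huS : (∑ g ∈ T, (f k' g - f k g) • g) ∈ S := by
    apply AddSubmonoid.sum_mem
    intro g hg
    exact S.nsmul_mem (hT ▸ AddSubmonoid.subset_closure hg) _
  have key : (k • h + x) + ∑ g ∈ T, (f k' g - f k g) • g = k' • h + x := by
    rw [hf k, hf k', ← Finset.sum_add_distrib]
    exact Finset.sum_congr rfl fun g hg => by
      rw [← add_smul, Nat.add_sub_cancel' (hle' g hg)]
  refine ⟨k' - k, by omega, ?_⟩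
  have hsplit : k' • h = k • h + (k' - k) • h := by
    rw [← add_smul]; congr 1; omega
  have h3 : (k • h + x) + ∑ g ∈ T, (f k' g - f k g) • g = (k • h + x) + (k' - k) • h := by
    rw [key, hsplit]
    exact add_right_comm _ _ _
  have h4 := add_left_cancel h3
  rw [← h4]; exact huS

/-- For an MPD affine semigroup `S` and nonzero `x ∈ S`,
`Maximals_{≤_S} Ap(S,{x}) = {h + x : h ∈ PF(S)}`. -/
theorem stmt1 {d : ℕ} (hd : 0 < d) (S : AddSubmonoid (Fin d → ℕ)) (hfg : S.FG)
    (hMPD : pseudoFrobenius S ≠ ∅)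
    (x : Fin d → ℕ) (hx : x ∈ S) (hx0 : x ≠ 0) :
    maximalsL (S : Set (Fin d → ℕ)) (aperySet S {x})
      = (fun h => h + x) '' pseudoFrobenius S := by
  ext a
  constructor
  · rintro ⟨⟨haS, haAp⟩, hmax⟩
    have hK : ∀ s ∈ S, s ≠ 0 → ∃ t ∈ S, a + s = t + x := by
      intro s hs hs0
      by_contra hcon
      push_neg at hcon
      have hmem : a + s ∈ aperySet S {x} := by
        refine ⟨S.add_mem haS hs, ?_⟩
        rintro ⟨x', hx', t, ht, heq⟩
        rw [Set.mem_singleton_iff] at hx'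
        subst hx'
        exact hcon t ht heq
      have hone : a = a + s := hmax (a + s) hmem ⟨s, hs, rfl⟩
      exact hs0 (left_eq_add.mp hone)
    by_cases hxa : x ≤ a
    · set h := a - x with hh
      have hhx : h + x = a := by
        funext i
        have h1 : x i ≤ a i := hxa i
        simp only [Pi.add_apply, hh, Pi.sub_apply]
        omega
      have hhs : ∀ s ∈ S, s ≠ 0 → h + s ∈ S := by
        intro s hs hs0
        obtain ⟨t, ht, heq⟩ := hK s hs hs0
        rw [← hhx] at heq
        have h2 : h + s + x = t + x := by rw [← heq]; abel
        rw [add_right_cancel h2]; exact ht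
      have hhnS : h ∉ S := fun hhS => haAp ⟨x, rfl, h, hhS, hhx.symm⟩
      have hwk : ∀ k : ℕ, k • h + x ∈ S := by
        intro k
        induction k with
        | zero => simpa using hx
        | succ n ih =>
          have hne : n • h + x ≠ 0 := by
            intro h0
            apply hx0
            funext i
            have h1 := congrFun h0 i
            simp only [Pi.add_apply, Pi.zero_apply] at h1 ⊢
            omega
          have h2 : (n + 1) • h + x = h + (n • h + x) := by rw [succ_nsmul]; abel
          rw [h2]; exact hhs _ ih hne
      obtain ⟨N, hN0, hNS⟩ := exists_nsmul_mem hfg hwk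
      exact ⟨h, ⟨⟨mem_coneSet_of_nsmul hN0 hNS, hhnS⟩, hhs⟩, hhx⟩
    · exfalso
      rw [Pi.le_def] at hxa; push_neg at hxa
      obtain ⟨j, hj⟩ := hxa
      have descent : ∀ m : ℕ, ∀ s, s ∈ S → s ≠ 0 → s j ≤ m → ∃ n ∈ S, n ≠ 0 ∧ x = a + n := by
        intro m
        induction m with
        | zero =>
          intro s hs hs0 hsj
          obtain ⟨t, ht, heq⟩ := hK s hs hs0
          have h1 := congrFun heq j
          simp only [Pi.add_apply] at h1
          omega
        | succ m ih =>
          intro s hs hs0 hsj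
          obtain ⟨t, ht, heq⟩ := hK s hs hs0
          by_cases ht0 : t = 0
          · subst ht0
            rw [zero_add] at heq
            exact ⟨s, hs, hs0, heq.symm⟩
          · have hcoord := congrFun heq j
            simp only [Pi.add_apply] at hcoord
            exact ih t ht ht0 (by omega)
      obtain ⟨n, hnS, hn0, hxan⟩ := descent (x j) x hx hx0 le_rfl
      obtain ⟨p, hpPF⟩ := Set.nonempty_iff_ne_empty.mpr hMPD
      have hpnS : p + n ∈ S := hpPF.2 n hnS hn0
      have hpn0 : p + n ≠ 0 := by
        intro h0; apply hn0; funext i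
        have h1 := congrFun h0 i
        simp only [Pi.add_apply, Pi.zero_apply] at h1 ⊢
        omega
      obtain ⟨t, ht, heq⟩ := hK (p + n) hpnS hpn0
      rw [hxan] at heq
      have hpt : p = t := by
        have h1 : p + (a + n) = t + (a + n) := by rw [← heq]; abel
        exact add_right_cancel h1
      exact hpPF.1.2 (by rw [hpt]; exact ht)
  · rintro ⟨h, ⟨⟨hcone, hhnS⟩, hPF⟩, rfl⟩
    refine ⟨⟨hPF x hx hx0, ?_⟩, ?_⟩
    · rintro ⟨x', hx', t, ht, heq⟩
      rw [Set.mem_singleton_iff] at hx'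
      subst hx'
      have het : h = t := add_right_cancel heq
      exact hhnS (by rwa [← het] at ht)
    · rintro b ⟨hbS, hbAp⟩ ⟨l, hl, hbeq⟩
      by_cases hl0 : l = 0
      · rw [hbeq, hl0, add_zero]
      · exact absurd ⟨x, rfl, h + l, hPF l hl hl0, by rw [hbeq]; exact add_right_comm h x l⟩ hbAp
end

section
/- Let A ⊆ ℕ^d be an antichain with respect to the componentwise order with 0 ∉ A, and set B(A) = {x ∈ ℕ^d \ {0} : x ≤ a componentwise for some a ∈ A}. Then for every a ∈ A there exists a relaxed monomial order ⪯ on ℕ^d such that b ⪯ a for every b ∈ B(A), i.e. a is the ⪯-maximum of B(A). -/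
/-- For an antichain `A ⊆ ℕ^d` with `0 ∉ A` and
`B(A) = {x ≠ 0 : x ≤ a for some a ∈ A}`, every `a ∈ A` is the maximum of `B(A)`
with respect to some relaxed monomial order. -/
theorem stmt2 {d : ℕ} (hd : 0 < d) (A : Set (Fin d → ℕ))
    (hA : IsAntichain (· ≤ ·) A) (h0 : (0 : Fin d → ℕ) ∉ A)
    (a : Fin d → ℕ) (haA : a ∈ A) :
    ∃ o : RelaxedMonomialOrder d,
      ∀ b ∈ {x : Fin d → ℕ | x ≠ 0 ∧ ∃ a' ∈ A, x ≤ a'}, o.le b a := by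
  classical
  set D : Set (Fin d → ℕ) := {x | ∃ a' ∈ A, x ≤ a'} with hDdef
  have hmax : ∀ x ∈ D, a ≤ x → x = a := by
    rintro x ⟨a', ha', hxa'⟩ hax
    have haa' : a = a' := by
      by_contra h
      exact hA haA ha' h (le_trans hax hxa')
    exact le_antisymm (haa' ▸ hxa') hax
  set c : (Fin d → ℕ) → ℕ := fun x => if x = a then 1 else if x ∈ D then 0 else 2 with hcdef
  set le : (Fin d → ℕ) → (Fin d → ℕ) → Prop :=
    fun u v => c u < c v ∨ (c u = c v ∧ (toLex u < toLex v ∨ u = v)) with hledef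
  have hlex : ∀ u v : Fin d → ℕ, u ≤ v → toLex u < toLex v ∨ u = v := by
    intro u v h
    rcases eq_or_ne u v with rfl | hne
    · exact Or.inr rfl
    · exact Or.inl (Pi.lex_lt_of_lt (IsWellFounded.wf) (h.lt_of_ne hne))
  have htri : ∀ u v : Fin d → ℕ,
      toLex u < toLex v ∨ u = v ∨ toLex v < toLex u := by
    intro u v
    have inst : ∀ i : Fin d, IsTrichotomous ℕ (· < ·) := fun _ => inferInstance
    rcases lt_trichotomy (toLex u) (toLex v) with h | h | h
    · exact Or.inl h
    · exact Or.inr (Or.inl h)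
    · exact Or.inr (Or.inr h)
  have hmono : ∀ u v : Fin d → ℕ, u ≤ v → le u v := by
    intro u v huv
    have hcle : c u ≤ c v := by
      by_cases hv : v = a
      · have huD : u ∈ D := ⟨a, haA, hv ▸ huv⟩
        have h1 : c v = 1 := by simp [hcdef, hv]
        have h2 : c u ≤ 1 := by
          by_cases hu : u = a
          · simp [hcdef, hu]
          · simp [hcdef, hu, huD]
        omega
      · by_cases hvD : v ∈ D
        · obtain ⟨a', ha', hva'⟩ := hvD
          have huD : u ∈ D := ⟨a', ha', le_trans huv hva'⟩
          have hua : u ≠ a := by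
            intro h
            exact hv (hmax v ⟨a', ha', hva'⟩ (h ▸ huv))
          have h2 : c u = 0 := by simp [hcdef, hua, huD]
          omega
        · have h1 : c v = 2 := by
            have hva : v ≠ a := hv
            simp [hcdef, hva, hvD]
          have h2 : c u ≤ 2 := by
            simp only [hcdef]; split_ifs <;> omega
          omega
    rcases lt_or_eq_of_le hcle with h | h
    · exact Or.inl h
    · exact Or.inr ⟨h, hlex u v huv⟩
  have hrefl : ∀ u, le u u := fun u => Or.inr ⟨rfl, Or.inr rfl⟩
  have htrans : ∀ u v w, le u v → le v w → le u w := by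
    rintro u v w (h1 | ⟨h1, h1'⟩) (h2 | ⟨h2, h2'⟩)
    · exact Or.inl (lt_trans h1 h2)
    · exact Or.inl (h2 ▸ h1)
    · exact Or.inl (h1 ▸ h2)
    · refine Or.inr ⟨h1.trans h2, ?_⟩
      rcases h1' with h1' | rfl
      · rcases h2' with h2' | rfl
        · exact Or.inl (lt_trans h1' h2')
        · exact Or.inl h1'
      · exact h2'
  have hanti : ∀ u v, le u v → le v u → u = v := by
    rintro u v (h1 | ⟨h1, h1'⟩) (h2 | ⟨h2, h2'⟩) <;> try omega
    rcases h1' with h1' | rfl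
    · rcases h2' with h2' | rfl
      · exact absurd (lt_trans h1' h2') (lt_irrefl _)
      · rfl
    · rfl
  have htotal : ∀ u v, le u v ∨ le v u := by
    intro u v
    rcases lt_trichotomy (c u) (c v) with h | h | h
    · exact Or.inl (Or.inl h)
    · rcases htri u v with h' | h' | h'
      · exact Or.inl (Or.inr ⟨h, Or.inl h'⟩)
      · exact Or.inl (Or.inr ⟨h, Or.inr h'⟩)
      · exact Or.inr (Or.inr ⟨h.symm, Or.inl h'⟩)
    · exact Or.inr (Or.inl h)
  refine ⟨⟨le, ?_, fun v => hmono 0 v (fun i => Nat.zero_le _),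
      fun u v w h => htrans u v (v + w) h (hmono v (v + w) le_self_add)⟩, ?_⟩
  · exact { refl := hrefl, trans := htrans, antisymm := hanti, total := htotal }
  · rintro b ⟨hb0, a', ha', hba'⟩
    by_cases hb : b = a
    · exact hb ▸ hrefl b
    · refine Or.inl ?_
      have hca : c a = 1 := by simp [hcdef]
      have hbD : b ∈ D := ⟨a', ha', hba'⟩
      have hcb : c b = 0 := by simp [hcdef, hb, hbD]
      omega
end

section
/- Let S ⊆ ℕ^d be a C-semigroup. Then FA(S) = Maximals_{≤} H(S), the set of gaps of S that are maximal with respect to the componentwise order on ℕ^d. -/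
/-- For a C-semigroup `S`, `FA(S)` equals the set of gaps of `S`
maximal with respect to the componentwise order on `ℕ^d`. -/
theorem stmt3 {d : ℕ} (hd : 0 < d) (S : AddSubmonoid (Fin d → ℕ)) (hfg : S.FG)
    (hfin : (gapSet S).Finite) :
    frobAllowable S = {a | a ∈ gapSet S ∧ ∀ b ∈ gapSet S, a ≤ b → a = b} := by
  ext a
  simp only [frobAllowable, Set.mem_setOf_eq]
  constructor
  · rintro ⟨ha, o, ho⟩
    refine ⟨ha, fun b hb hab => ?_⟩
    haveI := o.isLinearOrder
    have h1 : o.le b a := ho b hb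
    have h2 : o.le a b := by
      have hb' : b = a + (b - a) := by
        funext i
        simp [Nat.add_sub_cancel' (hab i)]
      rw [hb']
      exact o.le_add_right a a (b - a) (refl_of o.le a)
    exact antisymm h2 h1
  · rintro ⟨ha, hmax⟩
    refine ⟨ha, ?_⟩
    set r : (Fin d → ℕ) → (Fin d → ℕ) → Prop :=
      fun u v => u ≤ v ∨ ((∃ x ∈ gapSet S, u ≤ x) ∧ a ≤ v) with hr
    haveI : IsPartialOrder (Fin d → ℕ) r := by
      refine { refl := ?_, trans := ?_, antisymm := ?_ }
      case refine_3 =>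
        intro u v huv hvu
        rcases huv with huv | ⟨⟨x, hx, hux⟩, hav⟩
        · rcases hvu with hvu | ⟨⟨y, hy, hvy⟩, hau⟩
          · exact le_antisymm huv hvu
          · have hay : a = y := hmax y hy (le_trans hau (le_trans huv hvy))
            exact le_antisymm huv (le_trans hvy (hay.ge.trans hau))
        · rcases hvu with hvu | ⟨⟨y, hy, hvy⟩, hau⟩
          · have hax : a = x := hmax x hx (le_trans hav (le_trans hvu hux))
            exact le_antisymm (le_trans hux (hax.ge.trans hav)) hvu
          · have hax : a = x := hmax x hx (le_trans hau hux)
            have hay : a = y := hmax y hy (le_trans hav hvy)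
            have hu : u = a := le_antisymm (le_trans hux hax.ge) hau
            have hv : v = a := le_antisymm (le_trans hvy hay.ge) hav
            rw [hu, hv]
      case refine_1 => intro u; exact Or.inl le_rfl
      case refine_2 =>
        intro u v w huv hvw
        rcases huv with huv | ⟨hux, hav⟩
        · rcases hvw with hvw | ⟨⟨x, hx, hvx⟩, haw⟩
          · exact Or.inl (le_trans huv hvw)
          · exact Or.inr ⟨⟨x, hx, le_trans huv hvx⟩, haw⟩
        · rcases hvw with hvw | ⟨_, haw⟩
          · exact Or.inr ⟨hux, le_trans hav hvw⟩
          · exact Or.inr ⟨hux, haw⟩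
    obtain ⟨s, hs, hrs⟩ := extend_partialOrder r
    haveI := hs
    refine ⟨⟨s, hs, fun v => hrs _ _ (Or.inl (zero_le : (0 : Fin d → ℕ) ≤ v)),
      fun u v w huv => trans_of s huv (hrs _ _ (Or.inl le_self_add))⟩,
      fun x hx => hrs _ _ (Or.inr ⟨⟨x, hx, le_rfl⟩, le_rfl⟩)⟩
end

section
/- Let S ⊆ ℕ^d be a C-semigroup. Then FA(S) ⊆ Maximals_{≤_{C(S)}} H(S) ⊆ SG(S) ⊆ PF(S). -/
lemma mem_coneSet_of_mem {d : ℕ} (S : AddSubmonoid (Fin d → ℕ)) {x : Fin d → ℕ}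
    (hx : x ∈ S) : x ∈ coneSet S := by
  refine ⟨1, fun _ => 1, fun _ => x, fun _ => zero_le_one, fun _ => hx, fun j => by simp⟩

lemma coneSet_add {d : ℕ} (S : AddSubmonoid (Fin d → ℕ)) {x y : Fin d → ℕ}
    (hx : x ∈ coneSet S) (hy : y ∈ coneSet S) : x + y ∈ coneSet S := by
  obtain ⟨n, c, s, hc, hs, hsum⟩ := hx
  obtain ⟨m, c', s', hc', hs', hsum'⟩ := hy
  refine ⟨n + m, Fin.append c c', Fin.append s s', ?_, ?_, ?_⟩
  · intro i
    rcases Nat.lt_or_ge i.val n with h | h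
    · have : i = Fin.castAdd m ⟨i.val, h⟩ := by ext; simp
      rw [this, Fin.append_left]; exact hc _
    · have : i = Fin.natAdd n ⟨i.val - n, by omega⟩ := by ext; simp; omega
      rw [this, Fin.append_right]; exact hc' _
  · intro i
    rcases Nat.lt_or_ge i.val n with h | h
    · have : i = Fin.castAdd m ⟨i.val, h⟩ := by ext; simp
      rw [this, Fin.append_left]; exact hs _
    · have : i = Fin.natAdd n ⟨i.val - n, by omega⟩ := by ext; simp; omega
      rw [this, Fin.append_right]; exact hs' _
  · intro j
    rw [Fin.sum_univ_add]
    simp only [Fin.append_left, Fin.append_right]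
    have : ((x + y) j : ℚ) = (x j : ℚ) + (y j : ℚ) := by simp [Pi.add_apply]
    rw [this, hsum j, hsum' j]

/-- For a C-semigroup `S`,
`FA(S) ⊆ Maximals_{≤_{C(S)}} H(S) ⊆ SG(S) ⊆ PF(S)`. -/
theorem stmt4 {d : ℕ} (hd : 0 < d) (S : AddSubmonoid (Fin d → ℕ)) (hfg : S.FG)
    (hfin : (gapSet S).Finite) :
    frobAllowable S ⊆ maximalsL (coneSet S) (gapSet S) ∧
    maximalsL (coneSet S) (gapSet S) ⊆ specialGaps S ∧
    specialGaps S ⊆ pseudoFrobenius S := by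
  refine ⟨?_, ?_, fun h hh => hh.1⟩
  · rintro h ⟨hgap, o, ho⟩
    haveI := o.isLinearOrder
    refine ⟨hgap, fun b hb hle => ?_⟩
    obtain ⟨l, _, rfl⟩ := hle
    have h1 : o.le (h + l) h := ho _ hb
    have h2 : o.le h (h + l) := o.le_add_right h h l (refl_of o.le h)
    exact (antisymm h2 h1)
  · rintro h ⟨hgap, hmax⟩
    have hcone : h ∈ coneSet S := hgap.1
    have hh : h + h ∈ S := by
      by_contra hns
      have : h = h + h := hmax _ ⟨coneSet_add S hcone hcone, hns⟩ ⟨h, hcone, rfl⟩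
      have h0 : h = 0 := by
        funext j
        have := congrFun this j
        simp [Pi.add_apply] at this ⊢
        omega
      exact hgap.2 (h0 ▸ S.zero_mem)
    refine ⟨⟨hgap, fun s hs hs0 => ?_⟩, hh⟩
    by_contra hns
    have : h = h + s :=
      hmax _ ⟨coneSet_add S hcone (mem_coneSet_of_mem S hs), hns⟩
        ⟨s, mem_coneSet_of_mem S hs, rfl⟩
    apply hs0
    funext j
    have := congrFun this j
    simp [Pi.add_apply] at this ⊢
    omega
end

section
/- Let S ⊆ ℕ^d be a C-semigroup. Then S is symmetric (there exists a term order ⪯ and an element F ∈ H(S) with h ⪯ F for all h ∈ H(S) and PF(S) = {F}) if and only if there exists F ∈ H(S) such that h ≤_{C(S)} F for all h ∈ H(S) and PF(S) = {F}. -/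
/-! ### Auxiliary lemmas -/

lemma mem_coneSet_of_memS {d : ℕ} {S : AddSubmonoid (Fin d → ℕ)} {s : Fin d → ℕ} (hs : s ∈ S) :
    s ∈ coneSet S :=
  ⟨1, fun _ => 1, fun _ => s, fun _ => zero_le_one, fun _ => hs, fun j => by simp⟩

lemma coneSet_add_memS {d : ℕ} {S : AddSubmonoid (Fin d → ℕ)} {x s : Fin d → ℕ}
    (hx : x ∈ coneSet S) (hs : s ∈ S) : x + s ∈ coneSet S := by
  obtain ⟨n, c, t, hc, ht, hsum⟩ := hx
  refine ⟨n + 1, Fin.cons 1 c, Fin.cons s t, ?_, ?_, ?_⟩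
  · intro i
    induction i using Fin.cases with
    | zero => simp
    | succ i => simpa using hc i
  · intro i
    induction i using Fin.cases with
    | zero => simpa using hs
    | succ i => simpa using ht i
  · intro j
    rw [Fin.sum_univ_succ]
    simp only [Fin.cons_zero, Fin.cons_succ, one_mul, Pi.add_apply]
    rw [← hsum j]
    push_cast
    ring

lemma key_reach {d : ℕ} (S : AddSubmonoid (Fin d → ℕ)) (hfin : (gapSet S).Finite)
    (F : Fin d → ℕ) (hPF : pseudoFrobenius S = {F}) :
    ∀ h ∈ gapSet S, ∃ l ∈ S, F = h + l := by
  classical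
  obtain ⟨B, hB⟩ : ∃ B, ∀ g ∈ gapSet S, (∑ i, g i) ≤ B :=
    ⟨hfin.toFinset.sup (fun g => ∑ i, g i), fun g hg => by
      have := Finset.le_sup (f := fun g => ∑ i, g i) (hfin.mem_toFinset.2 hg)
      simpa using this⟩
  suffices H : ∀ k : ℕ, ∀ h, h ∈ gapSet S → B - (∑ i, h i) < k → ∃ l ∈ S, F = h + l from
    fun h hh => H (B - (∑ i, h i) + 1) h hh (Nat.lt_succ_self _)
  intro k
  induction k with
  | zero => intro h _ hk; omega
  | succ k ih =>
    intro h hh hk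
    by_cases hpf : h ∈ pseudoFrobenius S
    · have hhF : h = F := by rw [hPF] at hpf; exact hpf
      exact ⟨0, S.zero_mem, by simp [hhF]⟩
    · have hex : ∃ s ∈ S, s ≠ 0 ∧ h + s ∉ S := by
        by_contra hcon
        push_neg at hcon
        exact hpf ⟨hh, fun s hs hs0 => hcon s hs hs0⟩
      obtain ⟨s, hs, hs0, hns⟩ := hex
      have hhs : h + s ∈ gapSet S := ⟨coneSet_add_memS hh.1 hs, hns⟩
      have hspos : 0 < ∑ i, s i := by
        rcases Function.ne_iff.1 hs0 with ⟨i, hi⟩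
        exact Finset.sum_pos' (fun j _ => Nat.zero_le _)
          ⟨i, Finset.mem_univ i, Nat.pos_of_ne_zero hi⟩
      have hsum : ∑ i, h i < ∑ i, (h + s) i := by
        simp only [Pi.add_apply, Finset.sum_add_distrib]
        omega
      have hBle : (∑ i, (h + s) i) ≤ B := hB _ hhs
      obtain ⟨l, hl, hFl⟩ := ih (h + s) hhs (by omega)
      exact ⟨s + l, S.add_mem hs hl, by rw [hFl, add_assoc]⟩

noncomputable def lexLOCACM (d : ℕ) : LinearOrder (Lex (Fin d → ℕ)) :=
  @Pi.Lex.linearOrder (Fin d) (fun _ => ℕ) inferInstance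
    (inferInstance : WellFoundedLT (Fin d)) (fun _ => inferInstance)

lemma finWFLT (d : ℕ) : WellFoundedLT (Fin d) := inferInstance

lemma lexToLexMono (d : ℕ) {u v : Fin d → ℕ} (h : u ≤ v) :
    @LE.le (Lex (Fin d → ℕ)) (lexLOCACM d).toLE (toLex u) (toLex v) := by
  letI := lexLOCACM d
  exact Pi.toLex_monotone (ι := Fin d) (β := fun _ => ℕ)
    h

noncomputable def lexTermOrder (d : ℕ) : TermOrderOn d := by
  letI locacm := lexLOCACM d
  letI : LinearOrder (Lex (Fin d → ℕ)) := locacm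
  exact
  { le := fun u v => toLex u ≤ toLex v
    isLinearOrder :=
      { refl := fun a => le_refl (toLex a)
        trans := fun a b c hab hbc => le_trans hab hbc
        antisymm := fun a b hab hba => toLex.injective (le_antisymm hab hba)
        total := fun a b => by exact le_total (toLex a) (toLex b) }
    zero_le := fun v => by
      show toLex 0 ≤ toLex v
      exact lexToLexMono d (fun i => Nat.zero_le (v i))
    add_le_add_right := fun u v w h => by exact add_le_add_left h (toLex w) }

lemma lexTermOrder_le_add (d : ℕ) (h l : Fin d → ℕ) : (lexTermOrder d).le h (h + l) := by
  letI := lexLOCACM d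
  have h0 : (toLex (0 : Fin d → ℕ)) ≤ toLex l := lexToLexMono d (fun i => Nat.zero_le (l i))
  show toLex h ≤ toLex (h + l)
  exact le_add_of_nonneg_right h0

/-- A C-semigroup `S` is symmetric (with respect to some term order)
iff `PF(S)` consists of a single element `F` which is the greatest gap for `≤_{C(S)}`. -/
theorem stmt5 {d : ℕ} (hd : 0 < d) (S : AddSubmonoid (Fin d → ℕ)) (hfg : S.FG)
    (hfin : (gapSet S).Finite) :
    (∃ (o : TermOrderOn d) (F : Fin d → ℕ), F ∈ gapSet S ∧
        (∀ h ∈ gapSet S, o.le h F) ∧ pseudoFrobenius S = {F})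
    ↔ (∃ F ∈ gapSet S, (∀ h ∈ gapSet S, leL (coneSet S) h F) ∧
        pseudoFrobenius S = {F}) := by
  constructor
  · rintro ⟨o, F, hF, _, hPF⟩
    refine ⟨F, hF, fun h hh => ?_, hPF⟩
    obtain ⟨l, hl, hFl⟩ := key_reach S hfin F hPF h hh
    exact ⟨l, mem_coneSet_of_memS hl, hFl⟩
  · rintro ⟨F, hF, hmax, hPF⟩
    refine ⟨lexTermOrder d, F, hF, fun h hh => ?_, hPF⟩
    obtain ⟨l, _, hFl⟩ := hmax h hh
    rw [hFl]
    exact lexTermOrder_le_add d h l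
end

section
/- Let S ⊆ ℕ^d be a C-semigroup. The following are equivalent: (i) Maximals_{≤_{C(S)}} H(S) = SG(S); (ii) for every f ∈ PF(S), either f ∈ Maximals_{≤_{C(S)}} H(S) or f + f ∈ Maximals_{≤_{C(S)}} H(S); (iii) for every h ∈ H(S), either h + h ∈ Maximals_{≤_{C(S)}} H(S) or there exists F ∈ Maximals_{≤_{C(S)}} H(S) with F − h ∈ S (i.e. F = h + s for some s ∈ S). -/
section StmtSevenHelpers

variable {d : ℕ} {S : AddSubmonoid (Fin d → ℕ)}

private lemma stmt7_cone_of_mem {x : Fin d → ℕ} (hx : x ∈ S) : x ∈ coneSet S :=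
  ⟨1, fun _ => 1, fun _ => x, fun _ => zero_le_one, fun _ => hx, fun j => by simp⟩

private lemma stmt7_cone_zero : (0 : Fin d → ℕ) ∈ coneSet S :=
  ⟨0, Fin.elim0, Fin.elim0, fun i => i.elim0, fun i => i.elim0, fun j => by simp⟩

private lemma stmt7_cone_add {x y : Fin d → ℕ}
    (hx : x ∈ coneSet S) (hy : y ∈ coneSet S) : x + y ∈ coneSet S := by
  obtain ⟨n₁, c₁, s₁, hc₁, hs₁, hsum₁⟩ := hx
  obtain ⟨n₂, c₂, s₂, hc₂, hs₂, hsum₂⟩ := hy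
  refine ⟨n₁ + n₂, Fin.append c₁ c₂, Fin.append s₁ s₂, ?_, ?_, ?_⟩
  · intro i
    refine Fin.addCases (fun i => ?_) (fun i => ?_) i
    · simpa [Fin.append_left] using hc₁ i
    · simpa [Fin.append_right] using hc₂ i
  · intro i
    refine Fin.addCases (fun i => ?_) (fun i => ?_) i
    · simpa [Fin.append_left] using hs₁ i
    · simpa [Fin.append_right] using hs₂ i
  · intro j
    rw [Fin.sum_univ_add]
    simp only [Fin.append_left, Fin.append_right, Pi.add_apply, Nat.cast_add]
    rw [← hsum₁ j, ← hsum₂ j]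

private lemma stmt7_cone_nsmul {x : Fin d → ℕ}
    (hx : x ∈ coneSet S) (n : ℕ) : n • x ∈ coneSet S := by
  induction n with
  | zero => simpa using stmt7_cone_zero
  | succ k ih => rw [succ_nsmul]; exact stmt7_cone_add ih hx

private lemma stmt7_gap_ne_zero {h : Fin d → ℕ} (hh : h ∈ gapSet S) : h ≠ 0 :=
  fun h0 => hh.2 (h0 ▸ S.zero_mem)

private lemma stmt7_max_add_cone {m c : Fin d → ℕ}
    (hm : m ∈ maximalsL (coneSet S) (gapSet S))
    (hc : c ∈ coneSet S) (hc0 : c ≠ 0) : m + c ∈ S := by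
  by_contra hns
  have hgap : m + c ∈ gapSet S := ⟨stmt7_cone_add hm.1.1 hc, hns⟩
  have := hm.2 (m + c) hgap ⟨c, hc, rfl⟩
  exact hc0 (by simpa using (left_eq_add.mp this))

private lemma stmt7_maximals_subset_SG :
    maximalsL (coneSet S) (gapSet S) ⊆ specialGaps S := fun m hm =>
  ⟨⟨hm.1, fun s hs hs0 => stmt7_max_add_cone hm (stmt7_cone_of_mem hs) hs0⟩,
    stmt7_max_add_cone hm hm.1.1 (stmt7_gap_ne_zero hm.1)⟩

private lemma stmt7_add_ne_zero_left {x s : Fin d → ℕ} (hx : x ≠ 0) : x + s ≠ 0 := by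
  intro h0
  apply hx
  funext i
  have := congrFun h0 i
  simpa using (Nat.eq_zero_of_add_eq_zero_right this)

private lemma stmt7_exists_pf_above (hfin : (gapSet S).Finite) {h : Fin d → ℕ}
    (hh : h ∈ gapSet S) : ∃ f ∈ pseudoFrobenius S, ∃ s ∈ S, f = h + s := by
  set A : Set (Fin d → ℕ) := {x | x ∈ gapSet S ∧ ∃ s ∈ S, x = h + s} with hA
  have hAfin : A.Finite := hfin.subset (fun x hx => hx.1)
  have hAne : A.Nonempty := ⟨h, hh, 0, S.zero_mem, (add_zero h).symm⟩
  obtain ⟨f, hfA, hfmax'⟩ := Set.Finite.exists_maximalFor (fun x => ∑ i, x i) A hAfin hAne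
  have hfmax : ∀ a ∈ A, (∑ i, f i) ≤ (∑ i, a i) → (∑ i, f i) = ∑ i, a i :=
    fun a ha hle => le_antisymm hle (hfmax' ha hle)
  refine ⟨f, ⟨hfA.1, fun s hs hs0 => ?_⟩, hfA.2⟩
  by_contra hns
  obtain ⟨s₀, hs₀, hfe⟩ := hfA.2
  have hmem : f + s ∈ A :=
    ⟨⟨stmt7_cone_add hfA.1.1 (stmt7_cone_of_mem hs), hns⟩, s₀ + s, S.add_mem hs₀ hs,
      by rw [hfe, add_assoc]⟩
  have hle : (∑ i, f i) ≤ ∑ i, (f + s) i :=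
    Finset.sum_le_sum (fun i _ => by simp)
  have heq := hfmax (f + s) hmem hle
  apply hs0
  funext i
  have hsplit : (∑ i, f i) + ∑ i, s i = ∑ i, f i := by
    rw [← Finset.sum_add_distrib]
    exact heq.symm ▸ rfl
  have hsum0 : (∑ i, s i) = 0 := by omega
  have := (Finset.sum_eq_zero_iff.mp hsum0) i (Finset.mem_univ i)
  simpa using this

private lemma stmt7_key (hfin : (gapSet S).Finite)
    (hMax : maximalsL (coneSet S) (gapSet S) = specialGaps S)
    {f : Fin d → ℕ} (hf : f ∈ pseudoFrobenius S) :
    f ∈ maximalsL (coneSet S) (gapSet S) ∨ f + f ∈ maximalsL (coneSet S) (gapSet S) := by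
  classical
  have hf0 : f ≠ 0 := stmt7_gap_ne_zero hf.1
  obtain ⟨i0, hi0⟩ : ∃ i, f i ≠ 0 := Function.ne_iff.mp hf0
  have hex : ∃ m, 2 ≤ m ∧ m • f ∈ S := by
    by_contra hno
    push_neg at hno
    have hmem : ∀ n : ℕ, (n + 2) • f ∈ gapSet S := fun n =>
      ⟨stmt7_cone_nsmul hf.1.1 _, hno (n + 2) (by omega)⟩
    have hinj : Function.Injective (fun n : ℕ => (n + 2) • f) := by
      intro a b hab
      have := congrFun hab i0
      simp only [Pi.smul_apply, smul_eq_mul] at this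
      have := Nat.eq_of_mul_eq_mul_right (Nat.pos_of_ne_zero hi0) this
      omega
    exact (Set.infinite_of_injective_forall_mem hinj hmem) hfin
  obtain ⟨m, ⟨h2m, hmS⟩, hmin⟩ :
      ∃ m, (2 ≤ m ∧ m • f ∈ S) ∧ ∀ k < m, ¬(2 ≤ k ∧ k • f ∈ S) :=
    ⟨Nat.find hex, Nat.find_spec hex, fun k hk => Nat.find_min hex hk⟩
  have hnotS : ∀ j, 2 ≤ j → j < m → j • f ∉ S := fun j h2 hj hs => hmin j hj ⟨h2, hs⟩
  have hPF : ∀ j, 1 ≤ j → j < m → j • f ∈ pseudoFrobenius S := by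
    intro j h1
    induction j, h1 using Nat.le_induction with
    | base => intro _; simpa using hf
    | succ k hk ih =>
      intro hj
      have hkPF := ih (by omega)
      refine ⟨⟨stmt7_cone_nsmul hf.1.1 _, hnotS (k + 1) (by omega) hj⟩, fun s hs hs0 => ?_⟩
      have h1 : f + s ∈ S := hf.2 s hs hs0
      have h2 := hkPF.2 (f + s) h1 (stmt7_add_ne_zero_left hf0)
      have heq : (k + 1) • f + s = k • f + (f + s) := by rw [succ_nsmul, add_assoc]
      exact heq ▸ h2
  have hmne : m • f ≠ 0 := by
    intro h0
    have := congrFun h0 i0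
    simp only [Pi.smul_apply, smul_eq_mul, Pi.zero_apply] at this
    rcases Nat.mul_eq_zero.mp this with h | h <;> omega
  rcases Nat.lt_or_ge m 4 with h4 | h4
  · interval_cases m
    · -- m = 2
      left
      rw [hMax]
      exact ⟨hf, by rw [← two_nsmul]; exact hmS⟩
    · -- m = 3
      right
      rw [hMax]
      have h2f : f + f ∈ pseudoFrobenius S := by
        have := hPF 2 (by omega) (by omega)
        rwa [two_nsmul] at this
      have h3ne : (3 : ℕ) • f ≠ 0 := by
        intro h0
        have := congrFun h0 i0
        simp only [Pi.smul_apply, smul_eq_mul, Pi.zero_apply] at this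
        omega
      have h4f : (f + f) + (f + f) ∈ S := by
        have := hf.2 ((3 : ℕ) • f) hmS h3ne
        have heq : (f + f) + (f + f) = f + (3 : ℕ) • f := by
          rw [show (3 : ℕ) • f = f + f + f from by rw [succ_nsmul, two_nsmul]]
          abel
        rwa [heq]
      exact ⟨h2f, h4f⟩
  · exfalso
    have hkey : (m - 4) • f + m • f ∈ S := by
      rcases Nat.eq_or_lt_of_le h4 with h | h
      · rw [show m - 4 = 0 from by omega]
        simpa using hmS
      · exact (hPF (m - 4) (by omega) (by omega)).2 (m • f) hmS hmne
    have hjj : (m - 2) • f + (m - 2) • f ∈ S := by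
      have heq : (m - 2) • f + (m - 2) • f = (m - 4) • f + m • f := by
        rw [← add_nsmul, ← add_nsmul]
        congr 1
        omega
      rwa [heq]
    have hjSG : (m - 2) • f ∈ specialGaps S := ⟨hPF (m - 2) (by omega) (by omega), hjj⟩
    have hjM : (m - 2) • f ∈ maximalsL (coneSet S) (gapSet S) := hMax ▸ hjSG
    have hfS : (m - 2) • f + f ∈ S := stmt7_max_add_cone hjM hf.1.1 hf0
    have heq : (m - 2) • f + f = (m - 1) • f := by
      rw [show m - 1 = (m - 2) + 1 from by omega, succ_nsmul]
    exact hnotS (m - 1) (by omega) (by omega) (heq ▸ hfS)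

end StmtSevenHelpers

/-- Equivalent characterizations of quasi-irreducible C-semigroups. -/
theorem stmt7 {d : ℕ} (hd : 0 < d) (S : AddSubmonoid (Fin d → ℕ)) (hfg : S.FG)
    (hfin : (gapSet S).Finite) :
    ( (maximalsL (coneSet S) (gapSet S) = specialGaps S) ↔
      (∀ f ∈ pseudoFrobenius S,
        f ∈ maximalsL (coneSet S) (gapSet S) ∨ f + f ∈ maximalsL (coneSet S) (gapSet S)) ) ∧
    ( (∀ f ∈ pseudoFrobenius S,
        f ∈ maximalsL (coneSet S) (gapSet S) ∨ f + f ∈ maximalsL (coneSet S) (gapSet S)) ↔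
      (∀ h ∈ gapSet S, h + h ∈ maximalsL (coneSet S) (gapSet S) ∨
        ∃ F ∈ maximalsL (coneSet S) (gapSet S), ∃ s ∈ S, F = h + s) ) := by
  have iBA : (∀ f ∈ pseudoFrobenius S,
        f ∈ maximalsL (coneSet S) (gapSet S) ∨ f + f ∈ maximalsL (coneSet S) (gapSet S)) →
      maximalsL (coneSet S) (gapSet S) = specialGaps S := by
    intro hB
    apply Set.Subset.antisymm stmt7_maximals_subset_SG
    intro h hSG
    rcases hB h hSG.1 with h1 | h2
    · exact h1
    · exact absurd hSG.2 h2.1.2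
  have iAC : maximalsL (coneSet S) (gapSet S) = specialGaps S →
      ∀ h ∈ gapSet S, h + h ∈ maximalsL (coneSet S) (gapSet S) ∨
        ∃ F ∈ maximalsL (coneSet S) (gapSet S), ∃ s ∈ S, F = h + s := by
    intro hA h hh
    obtain ⟨f, hfPF, s₀, hs₀, hfe⟩ := stmt7_exists_pf_above hfin hh
    rcases stmt7_key hfin hA hfPF with h1 | h2
    · exact Or.inr ⟨f, h1, s₀, hs₀, hfe⟩
    · rcases eq_or_ne s₀ 0 with rfl | hs0
      · left
        rw [add_zero] at hfe
        rwa [hfe] at h2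
      · right
        refine ⟨f + f, h2, s₀ + f, ?_, ?_⟩
        · have : f + s₀ ∈ S := hfPF.2 s₀ hs₀ hs0
          rwa [add_comm] at this
        · nth_rewrite 1 [hfe]
          rw [add_assoc]
  have iCB : (∀ h ∈ gapSet S, h + h ∈ maximalsL (coneSet S) (gapSet S) ∨
        ∃ F ∈ maximalsL (coneSet S) (gapSet S), ∃ s ∈ S, F = h + s) →
      ∀ f ∈ pseudoFrobenius S,
        f ∈ maximalsL (coneSet S) (gapSet S) ∨ f + f ∈ maximalsL (coneSet S) (gapSet S) := by
    intro hC f hf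
    rcases hC f hf.1 with h1 | ⟨F, hF, s, hs, hFe⟩
    · exact Or.inr h1
    · rcases eq_or_ne s 0 with rfl | hs0
      · rw [add_zero] at hFe
        exact Or.inl (hFe ▸ hF)
      · exact absurd (show F ∈ S by rw [hFe]; exact hf.2 s hs hs0) hF.1.2
  refine ⟨⟨fun hA f hf => stmt7_key hfin hA hf, iBA⟩, ⟨fun hB => iAC (iBA hB), iCB⟩⟩
end

section
/- Let S ⊆ ℕ^d be a C-semigroup. Then 𝔠_S = {x ∈ S : x ≤_{C(S)} F holds for no F ∈ Maximals_{≤_{C(S)}} H(S)}. -/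
lemma cone_zero_mem {d : ℕ} (S : AddSubmonoid (Fin d → ℕ)) : (0 : Fin d → ℕ) ∈ coneSet S :=
  ⟨0, Fin.elim0, Fin.elim0, fun i => i.elim0, fun i => i.elim0, by simp⟩

lemma cone_of_mem {d : ℕ} {S : AddSubmonoid (Fin d → ℕ)} {x : Fin d → ℕ} (hx : x ∈ S) :
    x ∈ coneSet S :=
  ⟨1, fun _ => 1, fun _ => x, fun _ => zero_le_one, fun _ => hx, by simp⟩

lemma cone_add {d : ℕ} {S : AddSubmonoid (Fin d → ℕ)} {x y : Fin d → ℕ}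
    (hx : x ∈ coneSet S) (hy : y ∈ coneSet S) : x + y ∈ coneSet S := by
  obtain ⟨n, c, s, hc, hs, hsum⟩ := hx
  obtain ⟨m, c', s', hc', hs', hsum'⟩ := hy
  refine ⟨n + m, Fin.addCases c c', Fin.addCases s s', ?_, ?_, ?_⟩
  · intro i
    induction i using Fin.addCases with
    | left i => simpa using hc i
    | right i => simpa using hc' i
  · intro i
    induction i using Fin.addCases with
    | left i => simpa using hs i
    | right i => simpa using hs' i
  · intro j
    have h1 : ((x + y) j : ℚ) = (x j : ℚ) + (y j : ℚ) := by
      simp [Pi.add_apply]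
    rw [h1, hsum j, hsum' j, Fin.sum_univ_add]
    simp

/-- Description of the conductor of a C-semigroup. -/
theorem stmt9 {d : ℕ} (hd : 0 < d) (S : AddSubmonoid (Fin d → ℕ)) (hfg : S.FG)
    (hfin : (gapSet S).Finite) :
    conductorSet S =
      {x | x ∈ S ∧ ∀ F ∈ maximalsL (coneSet S) (gapSet S), ¬ leL (coneSet S) x F} := by
  ext x
  constructor
  · rintro ⟨hxS, hcond⟩
    refine ⟨hxS, ?_⟩
    rintro F ⟨hFgap, -⟩ ⟨c, hc, rfl⟩
    exact hFgap.2 (hcond c hc)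
  · rintro ⟨hxS, hmax⟩
    refine ⟨hxS, ?_⟩
    intro c hc
    by_contra hnot
    have hgap : x + c ∈ gapSet S := ⟨cone_add (cone_of_mem hxS) hc, hnot⟩
    set A : Set (Fin d → ℕ) := {h | h ∈ gapSet S ∧ leL (coneSet S) (x + c) h} with hA
    have hAfin : A.Finite := hfin.subset (fun h hh => hh.1)
    have hAne : (x + c) ∈ A := ⟨hgap, 0, cone_zero_mem S, by simp⟩
    obtain ⟨m, hmA, hmmax⟩ := (show ∃ m ∈ A, ∀ a' ∈ A, (∑ j, m j) ≤ ∑ j, a' j → (∑ j, m j) = ∑ j, a' j by obtain ⟨m, hmA, hmm⟩ := Set.Finite.exists_maximalFor (fun v => ∑ j, v j) A hAfin ⟨_, hAne⟩; exact ⟨m, hmA, fun a' ha' hle => le_antisymm hle (hmm ha' hle)⟩)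
    obtain ⟨hmgap, l0, hl0, hml0⟩ := hmA
    have hmmaximal : m ∈ maximalsL (coneSet S) (gapSet S) := by
      refine ⟨hmgap, ?_⟩
      rintro b hbgap ⟨l, hl, rfl⟩
      have hbA : m + l ∈ A := ⟨hbgap, l0 + l, cone_add hl0 hl, by rw [hml0]; ring⟩
      have hle : (∑ j, m j) ≤ ∑ j, (m + l) j := by
        simp only [Pi.add_apply, Finset.sum_add_distrib]
        exact Nat.le_add_right _ _
      have heq := hmmax _ hbA hle
      have hl0' : ∑ j, l j = 0 := by
        simp only [Pi.add_apply, Finset.sum_add_distrib] at heq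
        omega
      have : l = 0 := by
        funext j
        have := (Finset.sum_eq_zero_iff.mp hl0') j (Finset.mem_univ j)
        simpa using this
      simp [this]
    exact hmax m hmmaximal ⟨c + l0, cone_add hc hl0, by rw [hml0]; ring⟩
end

section
/- Let d ≥ 2 and let T ⊊ ℕ be a numerical semigroup. Let S_T = {x ∈ ℕ^d : x_1 + ⋯ + x_d ∈ T}, a generalized numerical semigroup whose minimal extremal rays are m(T)·e_1,…,m(T)·e_d. Then S_T has maximal reduced type, i.e. for every i ∈ {1,…,d} one has |𝔠_{S_T} ∩ Maximals_{≤_{S_T}} Ap(S_T,{m(T)·e_i})| = |PF(S_T)|, if and only if T has maximal reduced type, i.e. |{n ∈ ℕ : n ∉ T and F(T) − m(T) + 1 ≤ n ≤ F(T)}| = |PF(T)|. -/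
/-- The `T`-graded generalized numerical semigroup `S_T ⊆ ℕ^d`. -/
def STgraded (d : ℕ) (T : AddSubmonoid ℕ) : AddSubmonoid (Fin d → ℕ) where
  carrier := {x | (∑ i, x i) ∈ T}
  zero_mem' := by simpa using T.zero_mem
  add_mem' := by
    intro a b ha hb
    simpa [Finset.sum_add_distrib] using T.add_mem ha hb

/-- The `k`-thickening of `S ⊆ ℕ^d` along the last axis, inside `ℕ^d × ℕ ≅ ℕ^{d+1}`. -/
def thick {d : ℕ} (S : AddSubmonoid (Fin d → ℕ)) (k : ℕ) :
    AddSubmonoid ((Fin d → ℕ) × ℕ) where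
  carrier := {p | (p.1 ∈ S ∧ p.2 ≤ k) ∨ k + 1 ≤ p.2}
  zero_mem' := Or.inl ⟨S.zero_mem, Nat.zero_le k⟩
  add_mem' := by
    rintro ⟨a1, a2⟩ ⟨b1, b2⟩ ha hb
    rcases ha with ⟨ha1, ha2⟩ | ha2 <;> rcases hb with ⟨hb1, hb2⟩ | hb2
    · by_cases h : a2 + b2 ≤ k
      · exact Or.inl ⟨S.add_mem ha1 hb1, h⟩
      · exact Or.inr (show k + 1 ≤ a2 + b2 by omega)
    · exact Or.inr (show k + 1 ≤ a2 + b2 by omega)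
    · exact Or.inr (show k + 1 ≤ a2 + b2 by omega)
    · exact Or.inr (show k + 1 ≤ a2 + b2 by omega)

section Stmt14Aux

lemma mem_ST {d : ℕ} {T : AddSubmonoid ℕ} {a : Fin d → ℕ} :
    a ∈ STgraded d T ↔ (∑ i, a i) ∈ T := Iff.rfl

lemma sum_single' {d : ℕ} (i : Fin d) (c : ℕ) : ∑ k, Pi.single i c k = c := by
  simp

lemma exists_sub' {d : ℕ} (i : Fin d) {m : ℕ} {a : Fin d → ℕ} (h : m ≤ a i) :
    ∃ t : Fin d → ℕ, a = t + Pi.single i m := by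
  refine ⟨fun k => a k - (Pi.single i m : Fin d → ℕ) k, funext fun k => ?_⟩
  by_cases hk : k = i
  · subst hk
    simp only [Pi.add_apply, Pi.single_eq_same]
    omega
  · simp [Pi.single_eq_of_ne hk]

lemma sum_of_eq_add_single' {d : ℕ} {i : Fin d} {m : ℕ} {a t : Fin d → ℕ}
    (h : a = t + Pi.single i m) : ∑ k, a k = (∑ k, t k) + m := by
  subst h
  simp [Finset.sum_add_distrib, sum_single']

end Stmt14Aux

/-- For `d ≥ 2` and a proper numerical semigroup `T`, the `T`-graded
generalized numerical semigroup `S_T` has maximal reduced type iff `T` has maximal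
reduced type. Here `F(T) = sSup {n ∉ T}`, `m(T) = sInf (T \ {0})` and the minimal
extremal rays of `S_T` are `m(T)·e_i`. -/
theorem stmt14 {d : ℕ} (hd : 2 ≤ d) (T : AddSubmonoid ℕ)
    (hTfin : {n : ℕ | n ∉ T}.Finite) (hTproper : (T : Set ℕ) ≠ Set.univ) :
    (∀ i : Fin d,
      (conductorMonoid (STgraded d T) ∩
        maximalsL ((STgraded d T : Set (Fin d → ℕ)))
          (aperySet (STgraded d T)
            {Pi.single i (sInf {t : ℕ | t ∈ T ∧ t ≠ 0})})).ncard
        = (PFmonoid (STgraded d T)).ncard)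
    ↔ ({n : ℕ | n ∉ T ∧
          sSup {n : ℕ | n ∉ T} - sInf {t : ℕ | t ∈ T ∧ t ≠ 0} + 1 ≤ n ∧
          n ≤ sSup {n : ℕ | n ∉ T}}.ncard
        = (PFmonoid T).ncard) := by
  classical
  set F := sSup {n : ℕ | n ∉ T} with hFdef
  set m := sInf {t : ℕ | t ∈ T ∧ t ≠ 0} with hmdef
  have hd0 : 0 < d := by omega
  have hgaps_ne : {n : ℕ | n ∉ T}.Nonempty := by
    rcases (Set.ne_univ_iff_exists_notMem _).mp hTproper with ⟨n, hn⟩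
    exact ⟨n, hn⟩
  have hbdd : BddAbove {n : ℕ | n ∉ T} := hTfin.bddAbove
  have hFnot : F ∉ T := Nat.sSup_mem hgaps_ne hbdd
  have hle_F : ∀ n, n ∉ T → n ≤ F := fun n hn => le_csSup hbdd hn
  have hmemT : ∀ n, F < n → n ∈ T := by
    intro n hn
    by_contra h
    exact absurd (hle_F n h) (by omega)
  have hmne : {t : ℕ | t ∈ T ∧ t ≠ 0}.Nonempty := ⟨F + 1, hmemT _ (by omega), by omega⟩
  have hmmem : m ∈ T ∧ m ≠ 0 := Nat.sInf_mem hmne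
  have hm_le : ∀ t ∈ T, t ≠ 0 → m ≤ t := fun t ht h0 => Nat.sInf_le ⟨ht, h0⟩
  -- window gaps
  have hGwPF : {n : ℕ | n ∉ T ∧ F + 1 ≤ n + m} ⊆ PFmonoid T := by
    rintro n ⟨hn, hn2⟩
    refine ⟨hn, fun t ht h0 => hmemT _ ?_⟩
    have := hm_le t ht h0
    omega
  have hGwfin : {n : ℕ | n ∉ T ∧ F + 1 ≤ n + m}.Finite := hTfin.subset fun x hx => hx.1
  have hPFfin : (PFmonoid T).Finite := hTfin.subset fun x hx => hx.1
  set Gw := hGwfin.toFinset with hGwdef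
  set PFf := hPFfin.toFinset with hPFdef
  have hsub : Gw ⊆ PFf := by
    intro x hx
    rw [hGwdef, Set.Finite.mem_toFinset] at hx
    rw [hPFdef, Set.Finite.mem_toFinset]
    exact hGwPF hx
  -- characterization of PF(S_T)
  have hPFS : PFmonoid (STgraded d T) = {a : Fin d → ℕ | (∑ i, a i) ∈ PFmonoid T} := by
    ext a
    constructor
    · rintro ⟨h1, h2⟩
      refine ⟨h1, fun t ht h0 => ?_⟩
      have hs : (Pi.single (⟨0, hd0⟩ : Fin d) t) ∈ STgraded d T := by
        rw [mem_ST, sum_single']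
        exact ht
      have hne : (Pi.single (⟨0, hd0⟩ : Fin d) t : Fin d → ℕ) ≠ 0 := by
        intro h
        apply h0
        have := congrFun h ⟨0, hd0⟩
        simpa using this
      have h3 := h2 _ hs hne
      rw [mem_ST] at h3
      simpa [Finset.sum_add_distrib, sum_single'] using h3
    · rintro ⟨h1, h2⟩
      refine ⟨h1, fun s hs h0 => ?_⟩
      rw [mem_ST] at hs ⊢
      simp only [Pi.add_apply, Finset.sum_add_distrib]
      refine h2 _ hs ?_
      intro hc
      apply h0
      funext k
      have := (Finset.sum_eq_zero_iff).mp hc k (Finset.mem_univ k)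
      simpa using this
  -- characterization of the conductor ∩ maximal Apery set
  have hX : ∀ i : Fin d,
      conductorMonoid (STgraded d T) ∩
        maximalsL ((STgraded d T : Set (Fin d → ℕ)))
          (aperySet (STgraded d T) {Pi.single i m})
      = {a : Fin d → ℕ | m ≤ a i ∧ F + 1 ≤ ∑ k, a k ∧ (∑ k, a k) - m ∉ T} := by
    intro i
    obtain ⟨j, hj⟩ : ∃ j : Fin d, j ≠ i :=
      Fintype.exists_ne_of_one_lt_card (by simpa using (by omega : 1 < d)) i
    ext a
    constructor
    · rintro ⟨⟨haS, hcond⟩, haAp, hmax⟩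
      have hsum : F + 1 ≤ ∑ k, a k := by
        by_contra h
        push_neg at h
        have h2 := hcond (Pi.single (⟨0, hd0⟩ : Fin d) (F - ∑ k, a k))
        rw [mem_ST] at h2
        simp only [Pi.add_apply, Finset.sum_add_distrib, sum_single'] at h2
        have heq : (∑ k, a k) + (F - ∑ k, a k) = F := by omega
        rw [heq] at h2
        exact hFnot h2
      have hai : m ≤ a i := by
        by_contra h
        push_neg at h
        have hl : (Pi.single j m) ∈ STgraded d T := by
          rw [mem_ST, sum_single']
          exact hmmem.1
        have hbAp : a + Pi.single j m ∈ aperySet (STgraded d T) {Pi.single i m} := by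
          refine ⟨(STgraded d T).add_mem haS hl, ?_⟩
          rintro ⟨x, hx, t, htS, heq⟩
          rw [Set.mem_singleton_iff] at hx
          subst hx
          have h2 := congrFun heq i
          simp only [Pi.add_apply, Pi.single_eq_of_ne (Ne.symm hj), Pi.single_eq_same] at h2
          omega
        have h3 := hmax _ hbAp ⟨Pi.single j m, hl, rfl⟩
        have h4 := congrFun h3 j
        simp only [Pi.add_apply, Pi.single_eq_same] at h4
        exact hmmem.2 (by omega)
      refine ⟨hai, hsum, ?_⟩
      intro hmem
      obtain ⟨t, ht⟩ := exists_sub' i hai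
      apply haAp.2
      refine ⟨Pi.single i m, rfl, t, ?_, ht⟩
      rw [mem_ST]
      have h5 := sum_of_eq_add_single' ht
      have h6 : ∑ k, t k = (∑ k, a k) - m := by omega
      rwa [h6]
    · rintro ⟨hai, hsum, hnot⟩
      have haS : a ∈ STgraded d T := mem_ST.mpr (hmemT _ (by omega))
      have haAp : a ∈ aperySet (STgraded d T) {Pi.single i m} := by
        refine ⟨haS, ?_⟩
        rintro ⟨x, hx, t, htS, heq⟩
        rw [Set.mem_singleton_iff] at hx
        subst hx
        rw [mem_ST] at htS
        have h1 := sum_of_eq_add_single' heq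
        have h2 : ∑ k, t k = (∑ k, a k) - m := by omega
        rw [h2] at htS
        exact hnot htS
      refine ⟨⟨haS, fun n => ?_⟩, haAp, ?_⟩
      · rw [mem_ST]
        simp only [Pi.add_apply, Finset.sum_add_distrib]
        exact hmemT _ (by omega)
      · intro b hb hle
        obtain ⟨l, hlS, hbl⟩ := hle
        rcases eq_or_ne l 0 with rfl | hl0
        · rw [hbl, add_zero]
        · exfalso
          rw [SetLike.mem_coe, mem_ST] at hlS
          have hls0 : ∑ k, l k ≠ 0 := by
            intro hc
            apply hl0
            funext k
            have := (Finset.sum_eq_zero_iff).mp hc k (Finset.mem_univ k)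
            simpa using this
          have hlm : m ≤ ∑ k, l k := hm_le _ hlS hls0
          have hbi : m ≤ b i := by
            rw [hbl]
            simp only [Pi.add_apply]
            omega
          obtain ⟨t, ht⟩ := exists_sub' i hbi
          apply hb.2
          refine ⟨Pi.single i m, rfl, t, ?_, ht⟩
          rw [mem_ST]
          have h1 := sum_of_eq_add_single' ht
          have h2 : ∑ k, b k = (∑ k, a k) + ∑ k, l k := by
            rw [hbl]
            simp [Finset.sum_add_distrib]
          apply hmemT
          omega
  -- counting lemma
  have hcount : ∀ (P : Set ℕ) (hP : P.Finite),
      {a : Fin d → ℕ | (∑ k, a k) ∈ P}.ncard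
        = ∑ f ∈ hP.toFinset, (Finset.Nat.antidiagonalTuple d f).card := by
    intro P hP
    have hset : {a : Fin d → ℕ | (∑ k, a k) ∈ P}
        = ↑(hP.toFinset.biUnion fun f => Finset.Nat.antidiagonalTuple d f) := by
      ext a
      simp only [Set.mem_setOf_eq, Finset.coe_biUnion, Set.mem_iUnion, Finset.mem_coe,
        Finset.Nat.mem_antidiagonalTuple, Set.Finite.mem_toFinset]
      constructor
      · intro h
        exact ⟨_, h, rfl⟩
      · rintro ⟨f, hf, rfl⟩
        exact hf
    rw [hset, Set.ncard_coe_finset]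
    refine Finset.card_biUnion ?_
    intro x _ y _ hxy
    rw [Function.onFun, Finset.disjoint_left]
    intro a ha hb
    rw [Finset.Nat.mem_antidiagonalTuple] at ha hb
    exact hxy (by omega)
  have hPFScard : (PFmonoid (STgraded d T)).ncard
      = ∑ f ∈ PFf, (Finset.Nat.antidiagonalTuple d f).card := by
    rw [hPFS]
    exact hcount _ hPFfin
  -- cardinality of the LHS sets
  have hXcard : ∀ i : Fin d,
      (conductorMonoid (STgraded d T) ∩
        maximalsL ((STgraded d T : Set (Fin d → ℕ)))
          (aperySet (STgraded d T) {Pi.single i m})).ncard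
      = ∑ g ∈ Gw, (Finset.Nat.antidiagonalTuple d g).card := by
    intro i
    rw [hX i]
    have hset : {a : Fin d → ℕ | m ≤ a i ∧ F + 1 ≤ ∑ k, a k ∧ (∑ k, a k) - m ∉ T}
        = ↑(Gw.biUnion fun g =>
            (Finset.Nat.antidiagonalTuple d (g + m)).filter fun a => m ≤ a i) := by
      ext a
      simp only [Set.mem_setOf_eq, Finset.coe_biUnion, Set.mem_iUnion, Finset.mem_coe,
        Finset.mem_filter, Finset.Nat.mem_antidiagonalTuple, hGwdef, Set.Finite.mem_toFinset]
      constructor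
      · rintro ⟨h1, h2, h3⟩
        have hma : m ≤ ∑ k, a k :=
          le_trans h1 (Finset.single_le_sum (fun k _ => Nat.zero_le _) (Finset.mem_univ i))
        exact ⟨(∑ k, a k) - m, ⟨h3, by omega⟩, by omega, h1⟩
      · rintro ⟨g, ⟨hg1, hg2⟩, hsum, hai⟩
        refine ⟨hai, by omega, ?_⟩
        rw [show (∑ k, a k) - m = g by omega]
        exact hg1
    rw [hset, Set.ncard_coe_finset]
    rw [Finset.card_biUnion ?disj]
    case disj =>
      intro x _ y _ hxy
      rw [Function.onFun, Finset.disjoint_left]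
      intro a ha hb
      rw [Finset.mem_filter, Finset.Nat.mem_antidiagonalTuple] at ha hb
      exact hxy (by omega)
    refine Finset.sum_congr rfl fun g _ => ?_
    refine (Finset.card_bij (fun a _ => a + Pi.single i m) ?_ ?_ ?_).symm
    · intro a ha
      rw [Finset.Nat.mem_antidiagonalTuple] at ha
      rw [Finset.mem_filter, Finset.Nat.mem_antidiagonalTuple]
      constructor
      · simp [Finset.sum_add_distrib, sum_single', ha]
      · simp
    · intro a _ b _ h
      exact add_right_cancel h
    · intro b hb
      rw [Finset.mem_filter, Finset.Nat.mem_antidiagonalTuple] at hb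
      obtain ⟨t, ht⟩ := exists_sub' i hb.2
      refine ⟨t, ?_, ht.symm⟩
      rw [Finset.Nat.mem_antidiagonalTuple]
      have := sum_of_eq_add_single' ht
      omega
  have hApos : ∀ n : ℕ, 0 < (Finset.Nat.antidiagonalTuple d n).card := by
    intro n
    refine Finset.card_pos.mpr ⟨Pi.single ⟨0, hd0⟩ n, ?_⟩
    rw [Finset.Nat.mem_antidiagonalTuple]
    exact sum_single' _ _
  have hRHSset : {n : ℕ | n ∉ T ∧ F - m + 1 ≤ n ∧ n ≤ F} = ↑Gw := by
    ext n
    simp only [Set.mem_setOf_eq, hGwdef, Set.Finite.coe_toFinset]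
    constructor
    · rintro ⟨h1, h2, h3⟩
      have hn1 : n ≠ 0 := fun h => h1 (h ▸ T.zero_mem)
      exact ⟨h1, by omega⟩
    · rintro ⟨h1, h2⟩
      have hn1 : n ≠ 0 := fun h => h1 (h ▸ T.zero_mem)
      have := hle_F n h1
      exact ⟨h1, by omega, this⟩
  have hPFcard : (PFmonoid T).ncard = PFf.card := by
    rw [hPFdef, ← Set.ncard_coe_finset, Set.Finite.coe_toFinset]
  have key : (∑ g ∈ Gw, (Finset.Nat.antidiagonalTuple d g).card
        = ∑ f ∈ PFf, (Finset.Nat.antidiagonalTuple d f).card)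
      ↔ Gw.card = PFf.card := by
    rw [← Finset.sum_sdiff hsub]
    constructor
    · intro h
      have h0 : ∑ f ∈ PFf \ Gw, (Finset.Nat.antidiagonalTuple d f).card = 0 := by omega
      have hempty : PFf \ Gw = ∅ := by
        by_contra hne
        obtain ⟨x, hx⟩ := Finset.nonempty_iff_ne_empty.mpr hne
        have h1 := Finset.sum_eq_zero_iff.mp h0 x hx
        have h2 := hApos x
        omega
      have heq : Gw = PFf :=
        Finset.Subset.antisymm hsub (Finset.sdiff_eq_empty_iff_subset.mp hempty)
      rw [heq]
    · intro h
      have heq : Gw = PFf := Finset.eq_of_subset_of_card_le hsub (le_of_eq h.symm)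
      rw [heq]
      simp
  constructor
  · intro hL
    rw [hRHSset, Set.ncard_coe_finset, hPFcard, ← key]
    have h1 := hL ⟨0, hd0⟩
    rw [hXcard, hPFScard] at h1
    exact h1
  · intro hR
    intro i
    rw [hXcard, hPFScard]
    rw [hRHSset, Set.ncard_coe_finset, hPFcard] at hR
    exact key.mpr hR
end

section
/- Let S ⊆ ℕ^d be a generalized numerical semigroup, k ∈ ℕ, and let T_k(S) = (S × {0,…,k}) ∪ {(x,j) ∈ ℕ^d × ℕ : j ≥ k+1} ⊆ ℕ^{d+1} be its k-thickening (along the last axis). Then: (i) ℕ^{d+1} \ T_k(S) = (ℕ^d \ S) × {0,…,k}; (ii) PF(T_k(S)) = {(f,k) : f ∈ PF(S)}; (iii) 𝔠_{T_k(S)} = {(x,j) : x ∈ ℕ^d, j ≥ k+1} ∪ {(c+n, j) : c ∈ 𝔠_S, n ∈ ℕ^d, j ∈ ℕ}. -/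
lemma mem_thick {d : ℕ} {S : AddSubmonoid (Fin d → ℕ)} {k : ℕ} {p : (Fin d → ℕ) × ℕ} :
    p ∈ thick S k ↔ (p.1 ∈ S ∧ p.2 ≤ k) ∨ k + 1 ≤ p.2 := Iff.rfl

/-- Gaps, pseudo-Frobenius elements and conductor of the
`k`-thickening of a generalized numerical semigroup. -/
theorem stmt15 {d : ℕ} (hd : 0 < d) (S : AddSubmonoid (Fin d → ℕ))
    (hSfin : {x : Fin d → ℕ | x ∉ S}.Finite) (k : ℕ) :
    ({p : (Fin d → ℕ) × ℕ | p ∉ thick S k} = {p | p.1 ∉ S ∧ p.2 ≤ k}) ∧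
    (PFmonoid (thick S k) = (fun f => (f, k)) '' PFmonoid S) ∧
    (conductorMonoid (thick S k) =
      {p : (Fin d → ℕ) × ℕ | k + 1 ≤ p.2} ∪
      {p : (Fin d → ℕ) × ℕ | ∃ c ∈ conductorMonoid S, ∃ n : Fin d → ℕ, p.1 = c + n}) := by
  refine ⟨?_, ?_, ?_⟩
  · ext ⟨x, j⟩
    simp only [Set.mem_setOf_eq, mem_thick]
    constructor
    · intro h
      push_neg at h
      obtain ⟨h1, h2⟩ := h
      exact ⟨fun hx => absurd (h1 hx) (by omega), by omega⟩
    · rintro ⟨hx, hj⟩ (⟨h1, _⟩ | h2)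
      · exact hx h1
      · omega
  · ext ⟨h1, h2⟩
    simp only [PFmonoid, Set.mem_setOf_eq, Set.mem_image]
    constructor
    · rintro ⟨hnot, hadd⟩
      rw [mem_thick] at hnot
      push_neg at hnot
      obtain ⟨hm1, hm2⟩ := hnot
      have hh2k : h2 ≤ k := by omega
      have h1S : h1 ∉ S := fun hs => absurd (hm1 hs) (by omega)
      have hz : ((0, 1) : (Fin d → ℕ) × ℕ) ∈ thick S k := by
        rw [mem_thick]
        by_cases hk : 1 ≤ k
        · exact Or.inl ⟨S.zero_mem, hk⟩
        · exact Or.inr (by omega)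
      have hzne : ((0, 1) : (Fin d → ℕ) × ℕ) ≠ 0 := by
        simp [Prod.ext_iff]
      have hstep := hadd _ hz hzne
      rw [mem_thick] at hstep
      have hh2 : h2 = k := by
        rcases hstep with ⟨hs, _⟩ | hge
        · exact absurd (by simpa using hs) h1S
        · simp at hge; omega
      refine ⟨h1, ⟨h1S, ?_⟩, by rw [hh2]⟩
      intro s hs hsne
      have hsmem : ((s, 0) : (Fin d → ℕ) × ℕ) ∈ thick S k :=
        Or.inl ⟨hs, Nat.zero_le k⟩
      have hsne' : ((s, 0) : (Fin d → ℕ) × ℕ) ≠ 0 := by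
        simp [Prod.ext_iff, hsne]
      have := hadd _ hsmem hsne'
      rw [mem_thick] at this
      rcases this with ⟨hmem, _⟩ | hge
      · exact hmem
      · simp at hge; omega
    · rintro ⟨f, ⟨hfS, hf⟩, heq⟩
      obtain ⟨hf1, hf2⟩ := Prod.mk.injEq .. ▸ heq
      subst hf1; subst hf2
      constructor
      · rw [mem_thick]
        rintro (⟨hs, _⟩ | hge)
        · exact hfS hs
        · omega
      · rintro ⟨s1, s2⟩ hs hsne
        rw [mem_thick] at hs ⊢
        rcases hs with ⟨hs1, hs2⟩ | hge
        · by_cases h0 : s2 = 0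
          · subst h0
            have : s1 ≠ 0 := fun h => hsne (by simp [Prod.ext_iff, h])
            exact Or.inl ⟨hf s1 hs1 this, by simp⟩
          · exact Or.inr (by simp; omega)
        · exact Or.inr (by simp; omega)
  · ext ⟨p1, p2⟩
    simp only [conductorMonoid, Set.mem_setOf_eq, Set.mem_union]
    constructor
    · rintro ⟨hmem, hall⟩
      by_cases hp2 : k + 1 ≤ p2
      · exact Or.inl hp2
      · right
        rw [mem_thick] at hmem
        refine ⟨p1, ⟨?_, ?_⟩, 0, (add_zero p1).symm⟩
        · rcases hmem with ⟨hS, _⟩ | hge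
          · exact hS
          · omega
        · intro n
          have := hall (n, 0)
          rw [mem_thick] at this
          rcases this with ⟨hS, _⟩ | hge
          · simpa using hS
          · simp at hge; omega
    · rintro (hge | ⟨c, ⟨hcS, hc⟩, n, hpn⟩)
      · exact ⟨Or.inr hge, fun m => Or.inr (by simp; omega)⟩
      · subst hpn
        constructor
        · by_cases h : p2 ≤ k
          · exact Or.inl ⟨hc n, h⟩
          · exact Or.inr (by omega)
        · rintro ⟨m1, m2⟩
          rw [mem_thick]
          by_cases h : p2 + m2 ≤ k
          · exact Or.inl ⟨by show c + n + m1 ∈ S; rw [add_assoc]; exact hc (n + m1), h⟩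
          · exact Or.inr (by simp; omega)
end

section
/- Let d ≥ 2 and let a, r be positive integers with r < a − 1. Let S(a,r) ⊆ ℕ^d be the additive submonoid generated by {e_1,…,e_{d−1}} ∪ {(a+j)·e_d : 0 ≤ j ≤ r} ∪ {e_i + e_d : 1 ≤ i ≤ d−1}. Then |PF(S(a,r))| ≥ (d−1)·(⌈(a−1)/r⌉ − 1). -/
set_option maxHeartbeats 1000000

section Stmt17Aux

variable {d : ℕ}

private def genSet (d a r : ℕ) (hd : 2 ≤ d) : Set (Fin d → ℕ) :=
  {x : Fin d → ℕ | ∃ i : Fin d, (i : ℕ) + 1 < d ∧ x = Pi.single i 1} ∪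
  {x : Fin d → ℕ | ∃ j : ℕ, j ≤ r ∧
      x = Pi.single (⟨d - 1, by omega⟩ : Fin d) (a + j)} ∪
  {x : Fin d → ℕ | ∃ i : Fin d, (i : ℕ) + 1 < d ∧
      x = Pi.single i 1 + Pi.single (⟨d - 1, by omega⟩ : Fin d) 1}

private lemma fin_ne_last (hd : 2 ≤ d) (i : Fin d) :
    (i : ℕ) + 1 < d ↔ i ≠ (⟨d-1, by omega⟩ : Fin d) := by
  have := i.isLt
  rw [Ne, Fin.ext_iff]
  simp only [Fin.val_mk]
  omega

private lemma sum_single_erase (L i : Fin d) (v : ℕ) :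
    ∑ t ∈ Finset.univ.erase L, Pi.single i v t = if i = L then 0 else v := by
  rw [Finset.sum_congr rfl (fun t _ => Pi.single_apply i v t)]
  rw [Finset.sum_ite_eq' (Finset.univ.erase L) i (fun _ => v)]
  by_cases h : i = L <;> simp [h]

private lemma pure_mem (hd : 2 ≤ d) (a r : ℕ) (v : Fin d → ℕ)
    (hv : v ⟨d-1, by omega⟩ = 0) :
    v ∈ AddSubmonoid.closure (genSet d a r hd) := by
  have hrep : v = ∑ i : Fin d, Pi.single i (v i) := by
    ext t
    rw [Finset.sum_apply]
    rw [Finset.sum_congr rfl (fun s _ => Pi.single_apply s (v s) t)]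
    simp
  rw [hrep]
  apply AddSubmonoid.sum_mem
  intro i _
  by_cases hiL : i = (⟨d-1, by omega⟩ : Fin d)
  · subst hiL; rw [hv]
    rw [show (Pi.single (⟨d-1, by omega⟩ : Fin d) 0 : Fin d → ℕ) = 0 from Pi.single_zero _]
    exact AddSubmonoid.zero_mem _
  · have h1 : (Pi.single i (v i) : Fin d → ℕ) = (v i) • Pi.single i 1 := by
      ext t; simp [Pi.single_apply]
    rw [h1]
    have hgen : (Pi.single i 1 : Fin d → ℕ) ∈ AddSubmonoid.closure (genSet d a r hd) :=
      AddSubmonoid.subset_closure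
        (Set.mem_union_left _ (Set.mem_union_left _ ⟨i, (fin_ne_last hd i).2 hiL, rfl⟩))
    exact AddSubmonoid.nsmul_mem _ hgen (v i)

private lemma block_mem (hd : 2 ≤ d) (a r : ℕ) :
    ∀ k s : ℕ, s ≤ k * r →
      Pi.single (⟨d-1, by omega⟩ : Fin d) (k * a + s) ∈
        AddSubmonoid.closure (genSet d a r hd) := by
  intro k
  induction k with
  | zero =>
    intro s hs
    simp only [Nat.zero_mul, Nat.le_zero] at hs
    subst hs
    rw [show (Pi.single (⟨d-1, by omega⟩ : Fin d) (0*a+0) : Fin d → ℕ) = 0 by simp]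
    exact AddSubmonoid.zero_mem _
  | succ k ih =>
    intro s hs
    have hkr : (k+1) * r = k * r + r := by ring
    set s' := min s (k*r) with hs'def
    have h1 : s' ≤ k * r := min_le_right _ _
    have hss : s' ≤ s := min_le_left _ _
    have hj : s - s' ≤ r := by omega
    have key : Pi.single (⟨d-1, by omega⟩ : Fin d) ((k+1)*a+s)
        = Pi.single (⟨d-1, by omega⟩ : Fin d) (k*a+s')
          + (Pi.single (⟨d-1, by omega⟩ : Fin d) (a+(s-s')) : Fin d → ℕ) := by
      rw [← Pi.single_add]
      refine congrArg _ ?_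
      have h2 : (k+1)*a = k*a + a := by ring
      omega
    rw [key]
    refine AddSubmonoid.add_mem _ (ih s' h1) (AddSubmonoid.subset_closure ?_)
    exact Set.mem_union_left _ (Set.mem_union_right _ ⟨s-s', hj, rfl⟩)

private lemma build_mem (hd : 2 ≤ d) (a r : ℕ) :
    ∀ k' : ℕ, ∀ v : Fin d → ℕ, v ⟨d-1, by omega⟩ = 0 →
      k' ≤ ∑ t ∈ Finset.univ.erase (⟨d-1, by omega⟩ : Fin d), v t →
      ∀ m : ℕ,
      Pi.single (⟨d-1, by omega⟩ : Fin d) m ∈ AddSubmonoid.closure (genSet d a r hd) →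
      v + Pi.single (⟨d-1, by omega⟩ : Fin d) (m + k') ∈
        AddSubmonoid.closure (genSet d a r hd) := by
  intro k'
  induction k' with
  | zero =>
    intro v hv _ m hm
    refine AddSubmonoid.add_mem _ (pure_mem hd a r v hv) ?_
    simpa using hm
  | succ k' ih =>
    intro v hv hk m hm
    obtain ⟨i, hi_mem, hi⟩ : ∃ i ∈ Finset.univ.erase (⟨d-1, by omega⟩ : Fin d), v i ≠ 0 := by
      by_contra hcon
      push_neg at hcon
      rw [Finset.sum_eq_zero hcon] at hk
      omega
    have hiL : i ≠ (⟨d-1, by omega⟩ : Fin d) := (Finset.mem_erase.mp hi_mem).1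
    set v' : Fin d → ℕ := fun t => if t = i then v i - 1 else v t with hv'def
    have hv'L : v' ⟨d-1, by omega⟩ = 0 := by
      rw [hv'def]
      simp only [if_neg (Ne.symm hiL)]
      exact hv
    have hsum : ∑ t ∈ Finset.univ.erase (⟨d-1, by omega⟩ : Fin d), v' t + 1
        = ∑ t ∈ Finset.univ.erase (⟨d-1, by omega⟩ : Fin d), v t := by
      have e1 := Finset.add_sum_erase _ v hi_mem
      have e2 := Finset.add_sum_erase _ v' hi_mem
      have e3 : ∑ t ∈ (Finset.univ.erase (⟨d-1, by omega⟩ : Fin d)).erase i, v' t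
          = ∑ t ∈ (Finset.univ.erase (⟨d-1, by omega⟩ : Fin d)).erase i, v t := by
        refine Finset.sum_congr rfl (fun t ht => ?_)
        rw [hv'def]
        exact if_neg (Finset.mem_erase.mp ht).1
      have e4 : v' i = v i - 1 := by rw [hv'def]; exact if_pos rfl
      omega
    have hk' : k' ≤ ∑ t ∈ Finset.univ.erase (⟨d-1, by omega⟩ : Fin d), v' t := by omega
    have hrec := ih v' hv'L hk' m hm
    have hvv : v = v' + Pi.single i 1 := by
      funext t
      by_cases h1 : t = i
      · subst h1
        simp only [Pi.add_apply, hv'def, if_pos rfl, Pi.single_eq_same, if_true]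
        omega
      · simp only [Pi.add_apply, hv'def, if_neg h1, Pi.single_eq_of_ne h1, Nat.add_zero]
    have key : v + Pi.single (⟨d-1, by omega⟩ : Fin d) (m+(k'+1))
        = (v' + Pi.single (⟨d-1, by omega⟩ : Fin d) (m+k'))
          + (Pi.single i 1 + Pi.single (⟨d-1, by omega⟩ : Fin d) 1) := by
      rw [hvv]
      funext t
      simp only [Pi.add_apply, Pi.single_apply]
      split_ifs <;> omega
    rw [key]
    refine AddSubmonoid.add_mem _ hrec (AddSubmonoid.subset_closure ?_)
    exact Set.mem_union_right _ ⟨i, (fin_ne_last hd i).2 hiL, rfl⟩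

private lemma memS_iff (hd : 2 ≤ d) (a r : ℕ) (x : Fin d → ℕ) :
    x ∈ AddSubmonoid.closure (genSet d a r hd) ↔
      ∃ k s : ℕ, s ≤ k * r ∧ k * a + s ≤ x ⟨d-1, by omega⟩ ∧
        x ⟨d-1, by omega⟩ ≤ k * a + s +
          ∑ t ∈ Finset.univ.erase (⟨d-1, by omega⟩ : Fin d), x t := by
  constructor
  · intro hx
    induction hx using AddSubmonoid.closure_induction with
    | mem g hg =>
      rcases hg with (⟨i, hi, rfl⟩ | ⟨j, hj, rfl⟩) | ⟨i, hi, rfl⟩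
      · refine ⟨0, 0, Nat.zero_le _, ?_, ?_⟩ <;>
          rw [Pi.single_eq_of_ne (Ne.symm ((fin_ne_last hd i).1 hi))] <;> simp
      · refine ⟨1, j, by omega, ?_, ?_⟩ <;> rw [Pi.single_eq_same] <;> omega
      · have e1 : (Pi.single i 1 + Pi.single (⟨d-1, by omega⟩ : Fin d) 1 : Fin d → ℕ)
            ⟨d-1, by omega⟩ = 1 := by
          rw [Pi.add_apply, Pi.single_eq_same,
            Pi.single_eq_of_ne (Ne.symm ((fin_ne_last hd i).1 hi))]
        have e2 : ∑ t ∈ Finset.univ.erase (⟨d-1, by omega⟩ : Fin d),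
            (Pi.single i 1 + Pi.single (⟨d-1, by omega⟩ : Fin d) 1 : Fin d → ℕ) t = 1 := by
          simp only [Pi.add_apply]
          rw [Finset.sum_add_distrib, sum_single_erase, sum_single_erase,
            if_neg ((fin_ne_last hd i).1 hi), if_pos rfl]
        exact ⟨0, 0, Nat.zero_le _, by omega, by omega⟩
    | zero =>
      refine ⟨0, 0, Nat.zero_le _, ?_, ?_⟩ <;> simp
    | add x y hx hy ihx ihy =>
      obtain ⟨k1, s1, p1, p2, p3⟩ := ihx
      obtain ⟨k2, s2, q1, q2, q3⟩ := ihy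
      refine ⟨k1 + k2, s1 + s2, ?_, ?_, ?_⟩ <;>
        · have l1 : (k1+k2)*r = k1*r + k2*r := by ring
          have l2 : (k1+k2)*a = k1*a + k2*a := by ring
          have l3 : (x + y) ⟨d-1, by omega⟩ = x ⟨d-1, by omega⟩ + y ⟨d-1, by omega⟩ :=
            Pi.add_apply _ _ _
          have l4 : ∑ t ∈ Finset.univ.erase (⟨d-1, by omega⟩ : Fin d), (x+y) t
              = ∑ t ∈ Finset.univ.erase (⟨d-1, by omega⟩ : Fin d), x t
                + ∑ t ∈ Finset.univ.erase (⟨d-1, by omega⟩ : Fin d), y t :=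
            Finset.sum_add_distrib
          omega
  · rintro ⟨k, s, h1, h2, h3⟩
    have hvL : (fun t => if t = (⟨d-1, by omega⟩ : Fin d) then 0 else x t)
        (⟨d-1, by omega⟩ : Fin d) = 0 := if_pos rfl
    have hFv : ∑ t ∈ Finset.univ.erase (⟨d-1, by omega⟩ : Fin d),
          (fun t => if t = (⟨d-1, by omega⟩ : Fin d) then 0 else x t) t
        = ∑ t ∈ Finset.univ.erase (⟨d-1, by omega⟩ : Fin d), x t :=
      Finset.sum_congr rfl (fun t ht => if_neg (Finset.mem_erase.mp ht).1)
    have hx : x = (fun t => if t = (⟨d-1, by omega⟩ : Fin d) then 0 else x t)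
        + Pi.single (⟨d-1, by omega⟩ : Fin d)
            ((k*a+s) + (x ⟨d-1, by omega⟩ - (k*a+s))) := by
      funext t
      by_cases h : t = (⟨d-1, by omega⟩ : Fin d)
      · subst h
        simp only [Pi.add_apply, if_pos rfl, Pi.single_eq_same, if_true]
        omega
      · simp only [Pi.add_apply, if_neg h, Pi.single_eq_of_ne h, Nat.add_zero]
    rw [hx]
    exact build_mem hd a r (x ⟨d-1, by omega⟩ - (k*a+s))
      (fun t => if t = (⟨d-1, by omega⟩ : Fin d) then 0 else x t) hvL
      (le_of_le_of_eq (show _ ≤ ∑ t ∈ Finset.univ.erase (⟨d-1, by omega⟩ : Fin d), x t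
        by omega) hFv.symm) (k*a+s) (block_mem hd a r k s h1)

private lemma pf_char (hd : 2 ≤ d) (a r : ℕ) (h : Fin d → ℕ)
    (hgen : ∀ g ∈ genSet d a r hd, h + g ∈ AddSubmonoid.closure (genSet d a r hd)) :
    ∀ s ∈ AddSubmonoid.closure (genSet d a r hd), s ≠ 0 →
      h + s ∈ AddSubmonoid.closure (genSet d a r hd) := by
  intro s hs
  induction hs using AddSubmonoid.closure_induction with
  | mem g hg => exact fun _ => hgen g hg
  | zero => exact fun hne => absurd rfl hne
  | add x y hx hy ihx ihy =>
    intro hne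
    by_cases hx0 : x = 0
    · subst hx0
      by_cases hy0 : y = 0
      · subst hy0
        exact absurd (by simp) hne
      · rw [zero_add]
        exact ihy hy0
    · rw [← add_assoc]
      exact AddSubmonoid.add_mem _ (ihx hx0) hy

end Stmt17Aux

section Stmt17Aux2

variable {d : ℕ}

private def phiF (d a r : ℕ) (hd : 2 ≤ d) : ℕ × Fin d → (Fin d → ℕ) := fun p =>
  Pi.single p.2 (a - p.1*r - 2) + Pi.single (⟨d-1, by omega⟩ : Fin d) ((p.1+1)*a - 1)

private lemma phiF_last (hd : 2 ≤ d) (a r : ℕ) (n : ℕ) (i : Fin d)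
    (hiL : i ≠ (⟨d-1, by omega⟩ : Fin d)) :
    phiF d a r hd (n, i) ⟨d-1, by omega⟩ = (n+1)*a - 1 := by
  show (Pi.single i (a - n*r - 2) : Fin d → ℕ) ⟨d-1, by omega⟩
      + (Pi.single (⟨d-1, by omega⟩ : Fin d) ((n+1)*a - 1) : Fin d → ℕ) ⟨d-1, by omega⟩
      = (n+1)*a - 1
  rw [Pi.single_eq_of_ne (Ne.symm hiL), Pi.single_eq_same]
  omega

private lemma phiF_sum (hd : 2 ≤ d) (a r : ℕ) (n : ℕ) (i : Fin d)
    (hiL : i ≠ (⟨d-1, by omega⟩ : Fin d)) :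
    ∑ t ∈ Finset.univ.erase (⟨d-1, by omega⟩ : Fin d), phiF d a r hd (n, i) t
      = a - n*r - 2 := by
  show ∑ t ∈ Finset.univ.erase (⟨d-1, by omega⟩ : Fin d),
      ((Pi.single i (a - n*r - 2) : Fin d → ℕ) t
        + (Pi.single (⟨d-1, by omega⟩ : Fin d) ((n+1)*a - 1) : Fin d → ℕ) t)
      = a - n*r - 2
  rw [Finset.sum_add_distrib, sum_single_erase, sum_single_erase,
    if_neg hiL, if_pos rfl]
  omega

private lemma E1a (hd : 2 ≤ d) (a r : ℕ) (n : ℕ) (i : Fin d)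
    (hiL : i ≠ (⟨d-1, by omega⟩ : Fin d)) (i' : Fin d)
    (hi'L : i' ≠ (⟨d-1, by omega⟩ : Fin d)) :
    (phiF d a r hd (n, i) + Pi.single i' 1 : Fin d → ℕ) ⟨d-1, by omega⟩
      = (n+1)*a - 1 := by
  rw [Pi.add_apply, phiF_last hd a r n i hiL, Pi.single_eq_of_ne (Ne.symm hi'L)]
  omega

private lemma E2a (hd : 2 ≤ d) (a r : ℕ) (n : ℕ) (i : Fin d)
    (hiL : i ≠ (⟨d-1, by omega⟩ : Fin d)) (i' : Fin d)
    (hi'L : i' ≠ (⟨d-1, by omega⟩ : Fin d)) :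
    ∑ t ∈ Finset.univ.erase (⟨d-1, by omega⟩ : Fin d),
      (phiF d a r hd (n, i) + Pi.single i' 1 : Fin d → ℕ) t = (a - n*r - 2) + 1 := by
  simp only [Pi.add_apply]
  rw [Finset.sum_add_distrib, phiF_sum hd a r n i hiL, sum_single_erase, if_neg hi'L]

private lemma E1b (hd : 2 ≤ d) (a r : ℕ) (n : ℕ) (i : Fin d)
    (hiL : i ≠ (⟨d-1, by omega⟩ : Fin d)) (j : ℕ) :
    (phiF d a r hd (n, i) + Pi.single (⟨d-1, by omega⟩ : Fin d) (a+j) : Fin d → ℕ)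
      ⟨d-1, by omega⟩ = (n+1)*a - 1 + (a+j) := by
  rw [Pi.add_apply, phiF_last hd a r n i hiL, Pi.single_eq_same]

private lemma E2b (hd : 2 ≤ d) (a r : ℕ) (n : ℕ) (i : Fin d)
    (hiL : i ≠ (⟨d-1, by omega⟩ : Fin d)) (j : ℕ) :
    ∑ t ∈ Finset.univ.erase (⟨d-1, by omega⟩ : Fin d),
      (phiF d a r hd (n, i) + Pi.single (⟨d-1, by omega⟩ : Fin d) (a+j) : Fin d → ℕ) t
      = a - n*r - 2 := by
  simp only [Pi.add_apply]
  rw [Finset.sum_add_distrib, phiF_sum hd a r n i hiL, sum_single_erase, if_pos rfl]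
  omega

private lemma E1c (hd : 2 ≤ d) (a r : ℕ) (n : ℕ) (i : Fin d)
    (hiL : i ≠ (⟨d-1, by omega⟩ : Fin d)) (i' : Fin d)
    (hi'L : i' ≠ (⟨d-1, by omega⟩ : Fin d)) :
    (phiF d a r hd (n, i) + (Pi.single i' 1 + Pi.single (⟨d-1, by omega⟩ : Fin d) 1)
      : Fin d → ℕ) ⟨d-1, by omega⟩ = (n+1)*a - 1 + 1 := by
  rw [Pi.add_apply, phiF_last hd a r n i hiL, Pi.add_apply,
    Pi.single_eq_of_ne (Ne.symm hi'L), Pi.single_eq_same]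

private lemma E2c (hd : 2 ≤ d) (a r : ℕ) (n : ℕ) (i : Fin d)
    (hiL : i ≠ (⟨d-1, by omega⟩ : Fin d)) (i' : Fin d)
    (hi'L : i' ≠ (⟨d-1, by omega⟩ : Fin d)) :
    ∑ t ∈ Finset.univ.erase (⟨d-1, by omega⟩ : Fin d),
      (phiF d a r hd (n, i) + (Pi.single i' 1 + Pi.single (⟨d-1, by omega⟩ : Fin d) 1)
        : Fin d → ℕ) t = (a - n*r - 2) + 1 := by
  simp only [Pi.add_apply]
  rw [Finset.sum_add_distrib, phiF_sum hd a r n i hiL, Finset.sum_add_distrib,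
    sum_single_erase, sum_single_erase, if_neg hi'L, if_pos rfl]

private lemma phiF_mem_PF (hd : 2 ≤ d) (a r : ℕ) (ha : 0 < a) (hr : 0 < r)
    (n : ℕ) (hn : n*r + 3 ≤ a) (i : Fin d) (hiL : i ≠ (⟨d-1, by omega⟩ : Fin d)) :
    phiF d a r hd (n, i) ∈ PFmonoid (AddSubmonoid.closure (genSet d a r hd)) := by
  have hc2 : n*r + 2 + (a - n*r - 2) = a := by omega
  have hc1 : 1 ≤ a - n*r - 2 := by omega
  have l0 : (n+1)*r = n*r + r := by ring
  have l1 : (n+1)*a = n*a + a := by ring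
  have l2 : (n+2)*a = n*a + 2*a := by ring
  have l3 : (n+2)*r = n*r + 2*r := by ring
  constructor
  · -- not a member
    intro hmem
    rw [memS_iff hd a r] at hmem
    obtain ⟨k, s, hs1, hs2, hs3⟩ := hmem
    rw [phiF_last hd a r n i hiL] at hs2 hs3
    rw [phiF_sum hd a r n i hiL] at hs3
    have hka : k*a < (n+1)*a := by omega
    have hkn : k < n+1 := lt_of_mul_lt_mul_right hka (Nat.zero_le a)
    have hm1 : k*a ≤ n*a := Nat.mul_le_mul_right a (by omega)
    have hm2 : k*r ≤ n*r := Nat.mul_le_mul_right r (by omega)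
    omega
  · -- pseudo-Frobenius property
    refine pf_char hd a r _ ?_
    rintro g ((⟨i', hi', rfl⟩ | ⟨j, hj, rfl⟩) | ⟨i', hi', rfl⟩)
    · have hi'L := (fin_ne_last hd i').1 hi'
      rw [memS_iff hd a r]
      exact ⟨n, n*r, le_refl _,
        by rw [E1a hd a r n i hiL i' hi'L]; omega,
        by rw [E1a hd a r n i hiL i' hi'L, E2a hd a r n i hiL i' hi'L]; omega⟩
    · rw [memS_iff hd a r]
      rcases Nat.eq_zero_or_pos j with hj0 | hj0
      · subst hj0
        exact ⟨n+1, n*r+1, by omega,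
          by rw [E1b hd a r n i hiL 0]; omega,
          by rw [E1b hd a r n i hiL 0, E2b hd a r n i hiL 0]; omega⟩
      · exact ⟨n+2, j-1, by omega,
          by rw [E1b hd a r n i hiL j]; omega,
          by rw [E1b hd a r n i hiL j, E2b hd a r n i hiL j]; omega⟩
    · have hi'L := (fin_ne_last hd i').1 hi'
      rw [memS_iff hd a r]
      exact ⟨n+1, 0, Nat.zero_le _,
        by rw [E1c hd a r n i hiL i' hi'L]; omega,
        by rw [E1c hd a r n i hiL i' hi'L, E2c hd a r n i hiL i' hi'L]; omega⟩

private lemma PF_finite (hd : 2 ≤ d) (a r : ℕ) (ha : 0 < a) (hr : 0 < r) :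
    (PFmonoid (AddSubmonoid.closure (genSet d a r hd))).Finite := by
  refine Set.Finite.subset (Set.Finite.pi (fun _ : Fin d => Set.finite_Iic (a*a))) ?_
  rintro h ⟨hnot, -⟩
  have hLb : h ⟨d-1, by omega⟩ ≤ a*a := by
    by_contra hgt
    push_neg at hgt
    apply hnot
    rw [memS_iff hd a r]
    have e1 : h ⟨d-1, by omega⟩ % a + a * (h ⟨d-1, by omega⟩ / a) = h ⟨d-1, by omega⟩ :=
      Nat.mod_add_div _ _
    have e2 : h ⟨d-1, by omega⟩ % a < a := Nat.mod_lt _ ha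
    have hk : a ≤ h ⟨d-1, by omega⟩ / a := (Nat.le_div_iff_mul_le ha).mpr (by omega)
    have hkr : h ⟨d-1, by omega⟩ / a ≤ (h ⟨d-1, by omega⟩ / a) * r :=
      Nat.le_mul_of_pos_right _ hr
    have e3 : (h ⟨d-1, by omega⟩ / a) * a = a * (h ⟨d-1, by omega⟩ / a) := Nat.mul_comm _ _
    exact ⟨h ⟨d-1, by omega⟩ / a, h ⟨d-1, by omega⟩ % a, by omega, by omega, by omega⟩
  have hFlt : ∑ t ∈ Finset.univ.erase (⟨d-1, by omega⟩ : Fin d), h t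
      < h ⟨d-1, by omega⟩ := by
    by_contra hge
    push_neg at hge
    exact hnot ((memS_iff hd a r h).mpr ⟨0, 0, Nat.zero_le _, by omega, by omega⟩)
  intro t _
  simp only [Set.mem_Iic]
  by_cases ht : t = (⟨d-1, by omega⟩ : Fin d)
  · subst ht; exact hLb
  · have hle : h t ≤ ∑ u ∈ Finset.univ.erase (⟨d-1, by omega⟩ : Fin d), h u :=
      Finset.single_le_sum (fun _ _ => Nat.zero_le _)
        (Finset.mem_erase.mpr ⟨ht, Finset.mem_univ _⟩)
    omega

end Stmt17Aux2

/-- For `d ≥ 2` and positive integers `a, r` with `r < a - 1`, the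
generalized numerical semigroup `S(a,r)` has at least `(d-1)·(⌈(a-1)/r⌉ - 1)`
pseudo-Frobenius elements. Here `⌈(a-1)/r⌉ = (a - 1 + r - 1)/r` in `ℕ`. -/
theorem stmt17 {d : ℕ} (a r : ℕ) (hd : 2 ≤ d) (ha : 0 < a) (hr : 0 < r)
    (hra : r + 1 < a)
    (S : AddSubmonoid (Fin d → ℕ))
    (hS : S = AddSubmonoid.closure
      ({x : Fin d → ℕ | ∃ i : Fin d, (i : ℕ) + 1 < d ∧ x = Pi.single i 1} ∪
       {x : Fin d → ℕ | ∃ j : ℕ, j ≤ r ∧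
          x = Pi.single (⟨d - 1, by omega⟩ : Fin d) (a + j)} ∪
       {x : Fin d → ℕ | ∃ i : Fin d, (i : ℕ) + 1 < d ∧
          x = Pi.single i 1 + Pi.single (⟨d - 1, by omega⟩ : Fin d) 1})) :
    (d - 1) * ((a - 1 + r - 1) / r - 1) ≤ (PFmonoid S).ncard := by
  have hS' : S = AddSubmonoid.closure (genSet d a r hd) := hS
  rw [hS']
  clear hS hS' S
  have hNe : (a - 1 + r - 1) / r - 1 = (a - 2) / r := by
    have h0 : a - 1 + r - 1 = a - 2 + r := by omega
    have h1 : (a - 2 + r) / r = (a - 2) / r + 1 := Nat.add_div_right _ hr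
    rw [h0, h1]
    exact Nat.succ_sub_one _
  rw [hNe]
  have hNr : ((a-2)/r) * r ≤ a - 2 := Nat.div_mul_le_self _ _
  have hN1 : 1 ≤ (a-2)/r := (Nat.one_le_div_iff hr).mpr (by omega)
  have key : ∀ p : ℕ × Fin d, p.1 < (a-2)/r → p.2 ≠ (⟨d-1, by omega⟩ : Fin d) →
      phiF d a r hd p ∈ PFmonoid (AddSubmonoid.closure (genSet d a r hd)) := by
    intro p hp1 hp2
    have hmul : (p.1+1) * r ≤ ((a-2)/r) * r := Nat.mul_le_mul_right r (by omega)
    have l0 : (p.1+1)*r = p.1*r + r := by ring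
    exact phiF_mem_PF hd a r ha hr p.1 (by omega) p.2 hp2
  have hcn : ∀ n < (a-2)/r, 1 ≤ a - n*r - 2 := by
    intro n hn
    have hmul : (n+1) * r ≤ ((a-2)/r) * r := Nat.mul_le_mul_right r (by omega)
    have l0 : (n+1)*r = n*r + r := by ring
    omega
  set sFin : Finset (ℕ × Fin d) :=
    (Finset.range ((a-2)/r)) ×ˢ (Finset.univ.erase (⟨d-1, by omega⟩ : Fin d)) with hsFin
  have hcard : sFin.card = ((a-2)/r) * (d-1) := by
    rw [hsFin, Finset.card_product, Finset.card_range,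
      Finset.card_erase_of_mem (Finset.mem_univ _), Finset.card_univ, Fintype.card_fin]
  have hinj : Set.InjOn (phiF d a r hd) sFin := by
    rintro ⟨p1, p2⟩ hp ⟨q1, q2⟩ hq heq
    rw [hsFin, Finset.coe_product] at hp hq
    obtain ⟨hp1, hp2⟩ := hp
    obtain ⟨hq1, hq2⟩ := hq
    simp only [Finset.coe_range, Set.mem_Iio, Finset.coe_erase, Set.mem_diff,
      Set.mem_singleton_iff, Finset.coe_univ, Set.mem_univ, true_and] at hp1 hp2 hq1 hq2
    have hpL : p2 ≠ (⟨d-1, by omega⟩ : Fin d) := hp2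
    have hqL : q2 ≠ (⟨d-1, by omega⟩ : Fin d) := hq2
    have hL : phiF d a r hd (p1, p2) ⟨d-1, by omega⟩
        = phiF d a r hd (q1, q2) ⟨d-1, by omega⟩ := by rw [heq]
    rw [phiF_last hd a r p1 p2 hpL, phiF_last hd a r q1 q2 hqL] at hL
    have u1 : 0 < (p1+1)*a := Nat.mul_pos (Nat.succ_pos _) ha
    have u2 : 0 < (q1+1)*a := Nat.mul_pos (Nat.succ_pos _) ha
    have hp1' : (p1+1)*a = (q1+1)*a := by omega
    have hpq1 : p1 = q1 := by
      have := Nat.eq_of_mul_eq_mul_right ha hp1'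
      omega
    have hcp : 1 ≤ a - p1*r - 2 := hcn p1 hp1
    have hpq2 : p2 = q2 := by
      by_contra hne
      have hv : phiF d a r hd (p1, p2) p2 = phiF d a r hd (q1, q2) p2 := by rw [heq]
      have hv1 : phiF d a r hd (p1, p2) p2 = a - p1*r - 2 := by
        show (Pi.single p2 (a - p1*r - 2) : Fin d → ℕ) p2
            + (Pi.single (⟨d-1, by omega⟩ : Fin d) ((p1+1)*a - 1) : Fin d → ℕ) p2
            = a - p1*r - 2
        rw [Pi.single_eq_same, Pi.single_eq_of_ne hpL]
        omega
      have hv2 : phiF d a r hd (q1, q2) p2 = 0 := by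
        show (Pi.single q2 (a - q1*r - 2) : Fin d → ℕ) p2
            + (Pi.single (⟨d-1, by omega⟩ : Fin d) ((q1+1)*a - 1) : Fin d → ℕ) p2
            = 0
        rw [Pi.single_eq_of_ne (fun hh => hne hh), Pi.single_eq_of_ne hpL]
        omega
      rw [hv1, hv2] at hv
      omega
    rw [hpq1, hpq2]
  calc (d - 1) * ((a-2)/r) = sFin.card := by rw [hcard, Nat.mul_comm]
    _ = (sFin.image (phiF d a r hd)).card := (Finset.card_image_of_injOn hinj).symm
    _ = ((sFin.image (phiF d a r hd) : Finset (Fin d → ℕ)) : Set (Fin d → ℕ)).ncard :=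
        (Set.ncard_coe_finset _).symm
    _ ≤ (PFmonoid (AddSubmonoid.closure (genSet d a r hd))).ncard := by
        refine Set.ncard_le_ncard ?_ (PF_finite hd a r ha hr)
        intro x hx
        simp only [Finset.coe_image, Set.mem_image, Finset.mem_coe] at hx
        obtain ⟨p, hp, rfl⟩ := hx
        rw [hsFin, Finset.mem_product, Finset.mem_range, Finset.mem_erase] at hp
        exact key p hp.1 hp.2.1
end

section
/- Let S ⊆ ℕ^d be a C-semigroup and write C = C(S). Suppose S = S_1 ∩ ⋯ ∩ S_n, where each S_i is an irreducible C-semigroup over C: an additive submonoid S_i ⊆ C with C \ S_i finite such that whenever S_i = T_1 ∩ T_2 with T_1, T_2 additive submonoids of C having finite complement in C, one has S_i = T_1 or S_i = T_2. Then n ≥ |Maximals_{≤_C} H(S)|. -/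
lemma subset_coneSet {d : ℕ} (S : AddSubmonoid (Fin d → ℕ)) :
    (S : Set (Fin d → ℕ)) ⊆ coneSet S := by
  intro s hs
  exact ⟨1, fun _ => 1, fun _ => s, fun _ => zero_le_one, fun _ => hs, by simp⟩

lemma insert_submonoid {d : ℕ} (S T : AddSubmonoid (Fin d → ℕ))
    (hST : (S : Set (Fin d → ℕ)) ⊆ T) (x : Fin d → ℕ)
    (hxC : x ∈ coneSet S) (hx0 : x ≠ 0)
    (hTC : (T : Set (Fin d → ℕ)) ⊆ coneSet S)
    (hmax : ∀ c ∈ coneSet S, c ≠ 0 → x + c ∈ S) :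
    ∃ T' : AddSubmonoid (Fin d → ℕ), (T' : Set (Fin d → ℕ)) = insert x (T : Set (Fin d → ℕ)) := by
  have hadd : ∀ {a b : Fin d → ℕ}, a ∈ insert x (T : Set (Fin d → ℕ)) →
      b ∈ insert x (T : Set (Fin d → ℕ)) → a + b ∈ insert x (T : Set (Fin d → ℕ)) := by
    intro a b ha hb
    rw [Set.mem_insert_iff] at ha hb ⊢
    rcases ha with rfl | ha
    · rcases hb with rfl | hb
      · exact Or.inr (hST (hmax _ hxC hx0))
      · rcases eq_or_ne b 0 with rfl | hb0
        · simp
        · exact Or.inr (hST (hmax b (hTC hb) hb0))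
    · rcases hb with rfl | hb
      · rcases eq_or_ne a 0 with rfl | ha0
        · simp
        · exact Or.inr (hST (by rw [add_comm]; exact hmax a (hTC ha) ha0))
      · exact Or.inr (T.add_mem ha hb)
  exact ⟨⟨⟨insert x (T : Set (Fin d → ℕ)), hadd⟩, Set.mem_insert_iff.mpr (Or.inr T.zero_mem)⟩, rfl⟩

/-- If a C-semigroup `S` is an intersection of `n` irreducible
C-semigroups over `C = C(S)`, then `n ≥ |Maximals_{≤_C} H(S)|`. -/
theorem stmt19 {d : ℕ} (hd : 0 < d) (S : AddSubmonoid (Fin d → ℕ)) (hfg : S.FG)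
    (hfin : (gapSet S).Finite)
    (n : ℕ) (T : Fin n → AddSubmonoid (Fin d → ℕ))
    (hTsub : ∀ i, (T i : Set (Fin d → ℕ)) ⊆ coneSet S)
    (hTfin : ∀ i, (coneSet S \ (T i : Set (Fin d → ℕ))).Finite)
    (hTirr : ∀ i, ∀ T₁ T₂ : AddSubmonoid (Fin d → ℕ),
      (T₁ : Set (Fin d → ℕ)) ⊆ coneSet S → (T₂ : Set (Fin d → ℕ)) ⊆ coneSet S →
      (coneSet S \ (T₁ : Set (Fin d → ℕ))).Finite →
      (coneSet S \ (T₂ : Set (Fin d → ℕ))).Finite →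
      T i = T₁ ⊓ T₂ → T i = T₁ ∨ T i = T₂)
    (hdecomp : (S : Set (Fin d → ℕ)) = ⋂ i, (T i : Set (Fin d → ℕ))) :
    (maximalsL (coneSet S) (gapSet S)).ncard ≤ n := by
  classical
  set M := maximalsL (coneSet S) (gapSet S) with hM
  rcases M.eq_empty_or_nonempty with he | ⟨x0, hx0⟩
  · simp [he]
  have hST : ∀ j, (S : Set (Fin d → ℕ)) ⊆ (T j : Set (Fin d → ℕ)) := by
    intro j z hz
    rw [hdecomp] at hz
    exact Set.mem_iInter.mp hz j
  have hkey : ∀ x ∈ M, ∃ i, x ∉ (T i : Set (Fin d → ℕ)) := by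
    intro x hx
    by_contra h
    push_neg at h
    exact hx.1.2 (by rw [hdecomp]; exact Set.mem_iInter.mpr h)
  -- maximal gaps absorb nonzero cone elements into S
  have hmaxS : ∀ x ∈ M, ∀ c ∈ coneSet S, c ≠ 0 → x + c ∈ S := by
    intro x hx c hc hc0
    by_contra hxc
    have hxcC : x + c ∈ coneSet S := coneSet_add S hx.1.1 hc
    have heq : x = x + c := hx.2 (x + c) ⟨hxcC, hxc⟩ ⟨c, hc, rfl⟩
    exact hc0 (by simpa using heq.symm)
  have hMne0 : ∀ x ∈ M, x ≠ 0 := by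
    intro x hx h0
    exact hx.1.2 (h0 ▸ S.zero_mem)
  obtain ⟨i0, hi0⟩ := hkey x0 hx0
  let f : (Fin d → ℕ) → Fin n := fun x =>
    if hx : ∃ i, x ∉ (T i : Set (Fin d → ℕ)) then hx.choose else i0
  have hf : ∀ x ∈ M, x ∉ (T (f x) : Set (Fin d → ℕ)) := by
    intro x hx
    have h := hkey x hx
    simp only [f, dif_pos h]
    exact h.choose_spec
  have hinj : Set.InjOn f M := by
    intro x hx y hy hfxy
    by_contra hne
    set i := f x with hi
    have hxT : x ∉ (T i : Set (Fin d → ℕ)) := hf x hx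
    have hyT : y ∉ (T i : Set (Fin d → ℕ)) := hfxy ▸ hf y hy
    obtain ⟨T₁, hT₁⟩ := insert_submonoid S (T i) (hST i) x hx.1.1 (hMne0 x hx)
      (hTsub i) (hmaxS x hx)
    obtain ⟨T₂, hT₂⟩ := insert_submonoid S (T i) (hST i) y hy.1.1 (hMne0 y hy)
      (hTsub i) (hmaxS y hy)
    have hdec : T i = T₁ ⊓ T₂ := by
      apply SetLike.coe_injective
      rw [AddSubmonoid.coe_inf, hT₁, hT₂]
      ext z
      simp only [Set.mem_inter_iff, Set.mem_insert_iff, SetLike.mem_coe]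
      constructor
      · intro hz; exact ⟨Or.inr hz, Or.inr hz⟩
      · rintro ⟨rfl | hz1, hz2⟩
        · rcases hz2 with h | h
          · exact absurd h hne
          · exact h
        · exact hz1
    have hcone₁ : (T₁ : Set (Fin d → ℕ)) ⊆ coneSet S := by
      rw [hT₁]
      exact Set.insert_subset hx.1.1 (hTsub i)
    have hcone₂ : (T₂ : Set (Fin d → ℕ)) ⊆ coneSet S := by
      rw [hT₂]
      exact Set.insert_subset hy.1.1 (hTsub i)
    have hfin₁ : (coneSet S \ (T₁ : Set (Fin d → ℕ))).Finite := by
      refine (hTfin i).subset (Set.diff_subset_diff_right ?_)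
      rw [hT₁]; exact Set.subset_insert _ _
    have hfin₂ : (coneSet S \ (T₂ : Set (Fin d → ℕ))).Finite := by
      refine (hTfin i).subset (Set.diff_subset_diff_right ?_)
      rw [hT₂]; exact Set.subset_insert _ _
    rcases hTirr i T₁ T₂ hcone₁ hcone₂ hfin₁ hfin₂ hdec with h | h
    · exact hxT (by rw [h, hT₁]; exact Set.mem_insert _ _)
    · exact hyT (by rw [h, hT₂]; exact Set.mem_insert _ _)
  calc M.ncard = (f '' M).ncard := (Set.ncard_image_of_injOn hinj).symm
    _ ≤ (Set.univ : Set (Fin n)).ncard :=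
        Set.ncard_le_ncard (Set.subset_univ _) Set.finite_univ
    _ = n := by simp [Set.ncard_univ]
end
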